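/- arXiv:math/0111124 — 7 statements merged into one kernel-verified Lean document; each statement's English description precedes it below -/
import Mathlib

section
/- Let A be a maximal dissipative operator on a Hilbert space and z ∈ ℂ with Im z > 0 such that z is not in the spectrum of A. Then I − b_z(A)* b_z(A) = 4 (Im z) (A* − z I)⁻¹ (Im A) (A − z̄ I)⁻¹, where b_z(A) = (A − zI)(A − z̄I)⁻¹, and consequently I − b_z(A)* b_z(A) ≥ 0 and rank(I − b_z(A)* b_z(A)) = rank(Im A). -/
/-!
Put `D = A - z̄` and `M = A - z`. Expanding, `D* D - M* M = (z - z̄) (A* - A) = 4 (Im z) Im A`, and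
for `b = M D⁻¹` one has `1 - b* b = (D⁻¹)* (D* D - M* M) D⁻¹`, which is the factorisation.
Dissipativity gives `|⟨(A - z̄) x, x⟩| ≥ (Im z) ‖x‖²`, so `D` is invertible; positivity and the
rank then survive the congruence by the invertible `D⁻¹` and the scaling by `4 Im z > 0`.
-/

open ContinuousLinearMap Complex ComplexConjugate

theorem star_sub_conj_smul_one_mul_sub_star_sub_smul_one_mul
    {R : Type*} [Ring R] [StarRing R] [Algebra ℂ R] [StarModule ℂ R] (a : R) (z : ℂ) :
    star (a - conj z • 1) * (a - conj z • 1) - star (a - z • 1) * (a - z • 1) =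
      ((4 * z.im : ℝ) : ℂ) • ((2 * I)⁻¹ • (a - star a)) := by
  calc _ = (z - conj z) • (star a - a) := by
        simp only [star_sub, star_smul, star_one, RCLike.star_def, conj_conj, sub_mul, mul_sub,
          smul_mul_assoc, mul_smul_comm, mul_one, one_mul, smul_smul, smul_sub]
        match_scalars <;> ring
    _ = _ := by
        rw [sub_conj, smul_smul]
        match_scalars <;> field_simp <;> ring_nf <;> simp only [I_sq] <;> ring

theorem one_sub_star_mul_self_of_mul_inverse {R : Type*} [Ring R] [StarRing R] {d : R}
    (hd : IsUnit d) (m : R) :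
    1 - star (m * Ring.inverse d) * (m * Ring.inverse d) =
      star (Ring.inverse d) * (star d * d - star m * m) * Ring.inverse d := by
  have hstar : star (Ring.inverse d) * star d = 1 := by
    rw [← star_mul, Ring.mul_inverse_cancel d hd, star_one]
  have hone : 1 = star (Ring.inverse d) * (star d * d) * Ring.inverse d := by
    rw [← mul_assoc, hstar, one_mul, Ring.mul_inverse_cancel d hd]
  rw [star_mul, mul_sub, sub_mul, ← hone]
  simp only [mul_assoc]

namespace ContinuousLinearMap

section Rank

variable {K V : Type*} [DivisionRing K] [TopologicalSpace V] [AddCommGroup V] [Module K V]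

theorem rank_mul_mul_le (X S Y : V →L[K] V) :
    ((X * S * Y : V →L[K] V) : V →ₗ[K] V).rank ≤ (S : V →ₗ[K] V).rank :=
  (LinearMap.rank_comp_le_left _ _).trans (LinearMap.rank_comp_le_right _ _)

theorem rank_mul_mul_of_isUnit {U W : V →L[K] V} (hU : IsUnit U) (hW : IsUnit W)
    (S : V →L[K] V) : ((U * S * W : V →L[K] V) : V →ₗ[K] V).rank = (S : V →ₗ[K] V).rank := by
  obtain ⟨U, rfl⟩ := hU
  obtain ⟨W, rfl⟩ := hW
  refine (rank_mul_mul_le _ _ _).antisymm ?_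
  calc (S : V →ₗ[K] V).rank
      = ((↑U⁻¹ * (↑U * S * ↑W) * ↑W⁻¹ : V →L[K] V) : V →ₗ[K] V).rank := by simp [mul_assoc]
    _ ≤ _ := rank_mul_mul_le _ _ _

end Rank

theorem rank_smul_of_ne_zero {K V : Type*} [Field K] [TopologicalSpace V] [AddCommGroup V]
    [Module K V] [ContinuousConstSMul K V] {c : K} (hc : c ≠ 0) (S : V →L[K] V) :
    ((c • S : V →L[K] V) : V →ₗ[K] V).rank = (S : V →ₗ[K] V).rank := by
  rw [toLinearMap_smul, LinearMap.rank, LinearMap.range_smul _ _ hc, LinearMap.rank]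

section Dissipative

variable {H : Type*} [NormedAddCommGroup H] [InnerProductSpace ℂ H] [CompleteSpace H]

theorem re_inner_smul_sub_adjoint_apply_self (A : H →L[ℂ] H) (x : H) :
    (inner ℂ ((((2 * I)⁻¹ : ℂ) • (A - adjoint A)) x) x).re = -(inner ℂ (A x) x).im := by
  rw [smul_apply, sub_apply, inner_smul_left, inner_sub_left, adjoint_inner_left,
    ← inner_conj_symm x (A x), sub_conj]
  simp

theorem isUnit_sub_smul_one_of_im_neg {A : H →L[ℂ] H}
    (hA : (((2 * I)⁻¹ : ℂ) • (A - adjoint A)).IsPositive) {w : ℂ} (hw : w.im < 0) :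
    IsUnit (A - w • 1) := by
  refine isUnit_of_forall_le_norm_inner_map _ (c := ⟨-w.im, by linarith⟩) (neg_pos.2 hw)
    fun x ↦ ?_
  have hAx : (inner ℂ (A x) x).im ≤ 0 := by
    have := hA.re_inner_nonneg_left x
    rw [RCLike.re_to_complex, re_inner_smul_sub_adjoint_apply_self] at this
    linarith
  have him : (inner ℂ ((A - w • 1) x) x).im = (inner ℂ (A x) x).im + w.im * ‖x‖ ^ 2 := by
    rw [sub_apply, inner_sub_left, smul_apply, one_apply_eq_self, inner_smul_left,
      inner_self_eq_norm_sq_to_K]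
    simp [← Complex.ofReal_pow, sub_eq_add_neg]
  calc ‖x‖ ^ 2 * (⟨-w.im, _⟩ : NNReal) = -w.im * ‖x‖ ^ 2 := by simp [mul_comm]
    _ ≤ |(inner ℂ ((A - w • 1) x) x).im| := by
        rw [him]
        exact le_abs.mpr (Or.inr (by nlinarith))
    _ ≤ ‖inner ℂ ((A - w • 1) x) x‖ := abs_im_le_norm _

end Dissipative

end ContinuousLinearMap

theorem stmt_4_general {H : Type*} [NormedAddCommGroup H] [InnerProductSpace ℂ H] [CompleteSpace H]
    (A : H →L[ℂ] H)
    (hdiss : (((2 * Complex.I)⁻¹ : ℂ) • (A - adjoint A)).IsPositive)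
    (z : ℂ) (hz : 0 < z.im) :
    (1 - adjoint ((A - z • 1) * Ring.inverse (A - (starRingEnd ℂ z) • 1)) *
        ((A - z • 1) * Ring.inverse (A - (starRingEnd ℂ z) • 1)) =
      ((4 * z.im : ℝ)) • (Ring.inverse (adjoint A - z • 1) *
        (((2 * Complex.I)⁻¹ : ℂ) • (A - adjoint A)) *
        Ring.inverse (A - (starRingEnd ℂ z) • 1))) ∧
    (1 - adjoint ((A - z • 1) * Ring.inverse (A - (starRingEnd ℂ z) • 1)) *
        ((A - z • 1) * Ring.inverse (A - (starRingEnd ℂ z) • 1))).IsPositive ∧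
    LinearMap.rank
      ((1 - adjoint ((A - z • 1) * Ring.inverse (A - (starRingEnd ℂ z) • 1)) *
        ((A - z • 1) * Ring.inverse (A - (starRingEnd ℂ z) • 1)) : H →L[ℂ] H) : H →ₗ[ℂ] H) =
      LinearMap.rank ((((2 * Complex.I)⁻¹ : ℂ) • (A - adjoint A) : H →L[ℂ] H) : H →ₗ[ℂ] H) := by
  set T := ((2 * I)⁻¹ : ℂ) • (A - adjoint A)
  have hD : IsUnit (A - conj z • 1) := isUnit_sub_smul_one_of_im_neg hdiss (by simpa using hz)
  set d := Ring.inverse (A - conj z • 1)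
  have hinv : Ring.inverse (adjoint A - z • 1) = adjoint d := by
    simp only [d, ← star_eq_adjoint, ← Ring.inverse_star, star_sub, star_smul, star_one,
      RCLike.star_def, conj_conj]
  have hfactor : 1 - adjoint ((A - z • 1) * d) * ((A - z • 1) * d) =
      ((4 * z.im : ℝ) : ℂ) • (adjoint d * T * d) := by
    rw [← star_eq_adjoint, one_sub_star_mul_self_of_mul_inverse hD,
      star_sub_conj_smul_one_mul_sub_star_sub_smul_one_mul, star_eq_adjoint, star_eq_adjoint,
      mul_smul_comm, smul_mul_assoc]
  have h4 : (0 : ℝ) < 4 * z.im := by positivity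
  refine ⟨by rw [hinv, hfactor]; exact coe_smul _ _, ?_, ?_⟩
  · rw [hfactor, mul_assoc]
    exact (hdiss.adjoint_conj d).smul_of_nonneg (zero_le_real.2 h4.le)
  · rw [hfactor, rank_smul_of_ne_zero (ofReal_ne_zero.2 h4.ne')]
    exact rank_mul_mul_of_isUnit hD.ringInverse.star hD.ringInverse T

/-- For a (bounded) dissipative operator `A` and `z` in the upper half-plane outside the
spectrum, `I − b_z(A)* b_z(A) = 4 (Im z) (A* − z)⁻¹ (Im A) (A − z̄)⁻¹ ≥ 0`, and the rank of
`I − b_z(A)* b_z(A)` equals the rank of `Im A`. -/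
theorem stmt_4 {H : Type*} [NormedAddCommGroup H] [InnerProductSpace ℂ H] [CompleteSpace H]
    (A : H →L[ℂ] H)
    (hdiss : (((2 * Complex.I)⁻¹ : ℂ) • (A - adjoint A)).IsPositive)
    (z : ℂ) (hz : 0 < z.im) (hspec : z ∉ spectrum ℂ A) :
    (1 - adjoint ((A - z • 1) * Ring.inverse (A - (starRingEnd ℂ z) • 1)) *
        ((A - z • 1) * Ring.inverse (A - (starRingEnd ℂ z) • 1)) =
      ((4 * z.im : ℝ)) • (Ring.inverse (adjoint A - z • 1) *
        (((2 * Complex.I)⁻¹ : ℂ) • (A - adjoint A)) *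
        Ring.inverse (A - (starRingEnd ℂ z) • 1))) ∧
    (1 - adjoint ((A - z • 1) * Ring.inverse (A - (starRingEnd ℂ z) • 1)) *
        ((A - z • 1) * Ring.inverse (A - (starRingEnd ℂ z) • 1))).IsPositive ∧
    LinearMap.rank
      ((1 - adjoint ((A - z • 1) * Ring.inverse (A - (starRingEnd ℂ z) • 1)) *
        ((A - z • 1) * Ring.inverse (A - (starRingEnd ℂ z) • 1)) : H →L[ℂ] H) : H →ₗ[ℂ] H) =
      LinearMap.rank ((((2 * Complex.I)⁻¹ : ℂ) • (A - adjoint A) : H →L[ℂ] H) : H →ₗ[ℂ] H) :=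
  stmt_4_general A hdiss z hz
end

section
/- Let A be a maximal dissipative operator on a Hilbert space with rank(Im A) = n < ∞. Then for every z in the upper half-plane, 4 (Im z) · tr[(A* − zI)⁻¹ (Im A) (A − z̄I)⁻¹] ≤ n; i.e., the Uniform Trace Boundedness constant C₂(A) is at most n. -/
/-!
Write `K = Im A ≥ 0` and `R = (A - z̄)⁻¹`. Dissipativity gives
`|Im ⟪(A - z̄) v, v⟫| ≥ Im z ‖v‖²`, so `A - z̄` is invertible, and the identity
`‖(A - z̄) v‖² = ‖(A - z) v‖² + 4 Im z ⟪K v, v⟫` shows that `T = 4 Im z R* K R` satisfies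
`⟪T x, x⟫ ≤ ‖x‖²`. The range of `T` lies in `R* (range K)`, of dimension at most `n`. The diagonal
sum of `T` in any Hilbert basis equals its diagonal sum in an orthonormal basis of that subspace,
which has at most `n` terms, each at most `1`.
-/

open ContinuousLinearMap Complex

open scoped InnerProductSpace ComplexConjugate

section Trace

variable {𝕜 H ι : Type*} [RCLike 𝕜] [NormedAddCommGroup H] [InnerProductSpace 𝕜 H]
  [CompleteSpace H]

theorem HilbertBasis.hasSum_inner_apply_self_of_forall_mem {κ : Type*} [Fintype κ]
    (b : HilbertBasis ι 𝕜 H) {T : H →L[𝕜] H} {V : Submodule 𝕜 H}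
    (u : OrthonormalBasis κ 𝕜 V) (hTV : ∀ x, T x ∈ V) :
    HasSum (fun i ↦ ⟪T (b i), b i⟫_𝕜) (∑ j, ⟪T (u j), u j⟫_𝕜) := by
  have hexpand (x : H) :
      ⟪T x, x⟫_𝕜 = ∑ j, ⟪(u j : H), x⟫_𝕜 * ⟪x, adjoint T (u j)⟫_𝕜 := by
    have hTx : T x = ∑ j, ⟪(u j : H), T x⟫_𝕜 • (u j : H) := by
      simpa using congrArg Subtype.val (u.sum_repr' ⟨T x, hTV x⟩).symm
    rw [hTx, sum_inner]
    refine Finset.sum_congr rfl fun j _ ↦ ?_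
    rw [inner_smul_left, inner_conj_symm, adjoint_inner_right, mul_comm]
  rw [funext fun i ↦ hexpand (b i)]
  refine hasSum_sum fun j _ ↦ ?_
  rw [← adjoint_inner_right]
  exact b.hasSum_inner_mul_inner (u j : H) (adjoint T (u j))

theorem HilbertBasis.tsum_re_inner_apply_self_le_finrank (b : HilbertBasis ι 𝕜 H)
    {T : H →L[𝕜] H} {V : Submodule 𝕜 H} [FiniteDimensional 𝕜 V] (hTV : ∀ x, T x ∈ V)
    (hT : ∀ x, RCLike.re ⟪T x, x⟫_𝕜 ≤ ‖x‖ ^ 2) :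
    ∑' i, RCLike.re ⟪T (b i), b i⟫_𝕜 ≤ Module.finrank 𝕜 V := by
  let u := stdOrthonormalBasis 𝕜 V
  rw [(RCLike.hasSum_re 𝕜 (b.hasSum_inner_apply_self_of_forall_mem u hTV)).tsum_eq,
    map_sum]
  calc ∑ j, RCLike.re ⟪T (u j), u j⟫_𝕜 ≤ ∑ j, ‖(u j : H)‖ ^ 2 :=
        Finset.sum_le_sum fun j _ ↦ hT (u j)
    _ = Module.finrank 𝕜 V := by
      have hu (j) : ‖(u j : H)‖ = 1 := u.orthonormal.1 j
      simp [hu]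

end Trace

section Dissipative

variable {H : Type*} [NormedAddCommGroup H] [InnerProductSpace ℂ H] [CompleteSpace H]

-- The inner product is conjugate-linear in its first argument, so `Im A ≥ 0` reads
-- `Im ⟪A v, v⟫ ≤ 0` here.
theorem re_inner_imPart_apply_self (A : H →L[ℂ] H) (v : H) :
    (⟪(((2 * I)⁻¹ : ℂ) • (A - adjoint A)) v, v⟫_ℂ).re = -(⟪A v, v⟫_ℂ).im := by
  rw [smul_apply, sub_apply, inner_smul_left, inner_sub_left, adjoint_inner_left,
    ← inner_conj_symm v (A v), sub_conj]
  simp [Complex.mul_re]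

theorem norm_sub_conj_smul_one_apply_sq (A : H →L[ℂ] H) (z : ℂ) (v : H) :
    ‖(A - conj z • 1) v‖ ^ 2 = ‖(A - z • 1) v‖ ^ 2
      + 4 * z.im * (⟪(((2 * I)⁻¹ : ℂ) • (A - adjoint A)) v, v⟫_ℂ).re := by
  rw [re_inner_imPart_apply_self]
  simp only [sub_apply, smul_apply, one_apply_eq_self]
  rw [norm_sub_sq (𝕜 := ℂ), norm_sub_sq (𝕜 := ℂ), inner_smul_right, inner_smul_right]
  simp only [norm_smul, RCLike.norm_conj, RCLike.re_to_complex, Complex.mul_re,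
    Complex.conj_re, Complex.conj_im]
  ring

theorem ring_inverse_adjoint_sub_smul_one (A : H →L[ℂ] H) (z : ℂ) :
    Ring.inverse (adjoint A - z • 1) = adjoint (Ring.inverse (A - conj z • 1)) := by
  rw [← star_eq_adjoint, ← star_eq_adjoint, ← Ring.inverse_star, star_sub, star_smul,
    star_one, star_eq_adjoint, Complex.star_def, conj_conj]

theorem isUnit_sub_conj_smul_one (A : H →L[ℂ] H)
    (hdiss : (((2 * I)⁻¹ : ℂ) • (A - adjoint A)).IsPositive) {z : ℂ} (hz : 0 < z.im) :
    IsUnit (A - conj z • 1) := by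
  refine isUnit_of_forall_le_norm_inner_map _ (c := ⟨z.im, hz.le⟩) hz fun v ↦ ?_
  have him : (⟪A v, v⟫_ℂ).im ≤ 0 := by
    have := hdiss.re_inner_nonneg_left v
    rw [RCLike.re_to_complex, re_inner_imPart_apply_self] at this
    linarith
  have hinner : (⟪(A - conj z • 1) v, v⟫_ℂ).im = (⟪A v, v⟫_ℂ).im - z.im * ‖v‖ ^ 2 := by
    rw [sub_apply, inner_sub_left, smul_apply, one_apply_eq_self, inner_smul_left,
      inner_self_eq_norm_sq_to_K]
    simp [← ofReal_pow]
  calc ‖v‖ ^ 2 * z.im ≤ |(⟪(A - conj z • 1) v, v⟫_ℂ).im| := by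
        rw [hinner, abs_of_nonpos (by nlinarith)]; linarith
    _ ≤ ‖⟪(A - conj z • 1) v, v⟫_ℂ‖ := abs_im_le_norm _

theorem re_inner_cayley_defect_apply_self_le (A : H →L[ℂ] H)
    (hdiss : (((2 * I)⁻¹ : ℂ) • (A - adjoint A)).IsPositive) {z : ℂ} (hz : 0 < z.im) (x : H) :
    (⟪((4 * z.im : ℝ) • (Ring.inverse (adjoint A - z • 1) *
        (((2 * I)⁻¹ : ℂ) • (A - adjoint A)) * Ring.inverse (A - conj z • 1))) x, x⟫_ℂ).re
      ≤ ‖x‖ ^ 2 := by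
  set K := ((2 * I)⁻¹ : ℂ) • (A - adjoint A)
  set R := Ring.inverse (A - conj z • 1)
  have hR : (A - conj z • 1) (R x) = x := by
    rw [← mul_apply_eq_comp,
      Ring.mul_inverse_cancel _ (isUnit_sub_conj_smul_one A hdiss hz), one_apply_eq_self]
  have key := norm_sub_conj_smul_one_apply_sq A z (R x)
  rw [hR] at key
  rw [ring_inverse_adjoint_sub_smul_one, smul_apply, ← coe_smul, inner_smul_left,
    mul_apply_eq_comp, mul_apply_eq_comp, adjoint_inner_left, conj_ofReal, re_ofReal_mul]
  nlinarith [sq_nonneg ‖(A - z • 1) (R x)‖]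

end Dissipative

/-- If `A` is dissipative with `rank (Im A) = n < ∞`, then for every `z` in the upper
half-plane the trace of the positive operator
`4 (Im z) (A* − z)⁻¹ (Im A)(A − z̄)⁻¹ = I − b_z(A)* b_z(A)` is at most `n`
(the trace being computed as the sum of diagonal matrix entries in a Hilbert basis). -/
theorem stmt_5 {H : Type*} [NormedAddCommGroup H] [InnerProductSpace ℂ H] [CompleteSpace H]
    (A : H →L[ℂ] H)
    (hdiss : (((2 * Complex.I)⁻¹ : ℂ) • (A - adjoint A)).IsPositive)
    (n : ℕ)
    (hrank : LinearMap.rank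
      ((((2 * Complex.I)⁻¹ : ℂ) • (A - adjoint A) : H →L[ℂ] H) : H →ₗ[ℂ] H) = n)
    (z : ℂ) (hz : 0 < z.im)
    {ι : Type*} (b : HilbertBasis ι ℂ H) :
    ∑' i, (inner ℂ
      (((4 * z.im : ℝ) • (Ring.inverse (adjoint A - z • 1) *
        (((2 * Complex.I)⁻¹ : ℂ) • (A - adjoint A)) *
        Ring.inverse (A - (starRingEnd ℂ z) • 1))) (b i)) (b i) : ℂ).re ≤ (n : ℝ) := by
  set K := ((2 * Complex.I)⁻¹ : ℂ) • (A - adjoint A)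
  set R := Ring.inverse (A - (starRingEnd ℂ z) • 1)
  have : FiniteDimensional ℂ (LinearMap.range (K : H →ₗ[ℂ] H)) :=
    Module.finite_of_rank_eq_nat hrank
  let V := (LinearMap.range (K : H →ₗ[ℂ] H)).map (adjoint R : H →ₗ[ℂ] H)
  have hTV (x : H) : ((4 * z.im : ℝ) • (Ring.inverse (adjoint A - z • 1) * K * R)) x ∈ V := by
    rw [ring_inverse_adjoint_sub_smul_one]
    exact V.smul_of_tower_mem _ (Submodule.mem_map_of_mem (LinearMap.mem_range_self _ _))
  calc _ ≤ (Module.finrank ℂ V : ℝ) := b.tsum_re_inner_apply_self_le_finrank hTV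
        (re_inner_cayley_defect_apply_self_le A hdiss hz)
    _ ≤ n := by
      exact_mod_cast (Submodule.finrank_map_le _ _).trans (Module.finrank_eq_of_rank_eq hrank).le
end

section
/- Let Λ = {z_k} be a Carleson sequence in the upper half-plane, i.e., inf_{z∈Λ} Π_{w∈Λ∖{z}} |b_w(z)| ≥ δ₀ > 0, where b_w(z) = (z−w)/(z−w̄). Then there exists a constant c = c(δ₀) > 0 such that Π_{w∈Λ} |b_w(z)| ≥ c · inf_{w∈Λ} |b_w(z)| for all z ∈ ℂ₊. -/
/-!
Write `ρ(u, w) = ‖b_w(u)‖` for the pseudo-hyperbolic distance. Taking logarithms in the Carleson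
condition gives `∑_{j ≠ k} (1 - ρ(z_k, z_j)²) ≤ 2 log δ₀⁻¹` at every point `z_k`. Removing the
highest point of a box and inducting upgrades this to the Carleson-box estimate
`∑_{z_j ∈ Q} Im z_j ≤ C ℓ(Q)`, and a dyadic decomposition then bounds `∑_j (1 - ρ(ζ, z_j)²)`
uniformly in `ζ ∈ ℂ₊`. Hence the factors with `ρ(ζ, z_j) ≥ 1/4` have product at least
`exp (-4 ∑ (1 - ρ²))`, which is bounded below. The factors with `ρ(ζ, z_j) < 1/4` come from points
at mutual distance `< 1/2`, of which there are boundedly many, and by `δ₀`-separation all of them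
but the smallest are `≥ δ₀/2`; the smallest is at least `inf_j ρ(ζ, z_j)`.
-/

open ComplexConjugate Real

/-- `‖b_w(u)‖`, the pseudo-hyperbolic distance between points of the upper half-plane. -/
noncomputable def pseudoDist (u w : ℂ) : ℝ := ‖(u - w) / (u - conj w)‖

theorem Real.tanh_le_tanh {a b : ℝ} (hab : a ≤ b) : tanh a ≤ tanh b := by
  rw [tanh_eq_sinh_div_cosh, tanh_eq_sinh_div_cosh, div_le_div_iff₀ (cosh_pos a) (cosh_pos b)]
  nlinarith [sinh_sub b a, sinh_nonneg_iff.2 (sub_nonneg.2 hab)]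

theorem Real.tanh_add_le {a b : ℝ} (ha : 0 ≤ a) (hb : 0 ≤ b) :
    tanh (a + b) ≤ tanh a + tanh b := by
  have hsa : 0 ≤ sinh a := sinh_nonneg_iff.2 ha
  have hsb : 0 ≤ sinh b := sinh_nonneg_iff.2 hb
  have hca := one_le_cosh a
  have hcb := one_le_cosh b
  rw [tanh_eq_sinh_div_cosh, tanh_eq_sinh_div_cosh, tanh_eq_sinh_div_cosh,
    div_add_div _ _ (by positivity) (by positivity),
    div_le_div_iff₀ (cosh_pos _) (by positivity), sinh_add, cosh_add]
  nlinarith [mul_nonneg (mul_nonneg hsa hsb)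
    (add_nonneg (mul_nonneg hsa (by linarith : (0:ℝ) ≤ cosh b))
      (mul_nonneg (by linarith : (0:ℝ) ≤ cosh a) hsb))]

section PseudoDist

variable {u v w : ℂ}

theorem pseudoDist_nonneg (u w : ℂ) : 0 ≤ pseudoDist u w := norm_nonneg _

theorem pseudoDist_comm (u w : ℂ) : pseudoDist u w = pseudoDist w u := by
  rw [pseudoDist, pseudoDist, norm_div, norm_div, norm_sub_rev u w,
    ← Complex.norm_conj (u - conj w), map_sub, Complex.conj_conj, norm_sub_rev (conj u) w]

theorem norm_sub_conj_sq (u w : ℂ) :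
    ‖u - conj w‖ ^ 2 = (u.re - w.re) ^ 2 + (u.im + w.im) ^ 2 := by
  simp only [Complex.sq_norm, Complex.normSq_apply, Complex.sub_re, Complex.sub_im,
    Complex.conj_re, Complex.conj_im]
  ring

theorem norm_sub_conj_sq_eq_norm_sub_sq_add (u w : ℂ) :
    ‖u - conj w‖ ^ 2 = ‖u - w‖ ^ 2 + 4 * u.im * w.im := by
  simp only [Complex.sq_norm, Complex.normSq_apply, Complex.sub_re, Complex.sub_im,
    Complex.conj_re, Complex.conj_im]
  ring

theorem norm_sub_conj_pos (hu : 0 < u.im) (hw : 0 < w.im) : 0 < ‖u - conj w‖ := by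
  refine norm_pos_iff.2 fun h => ?_
  have him := congrArg Complex.im h
  simp only [Complex.sub_im, Complex.conj_im, Complex.zero_im] at him
  linarith

theorem one_sub_pseudoDist_sq (hu : 0 < u.im) (hw : 0 < w.im) :
    1 - pseudoDist u w ^ 2 = 4 * u.im * w.im / ‖u - conj w‖ ^ 2 := by
  have hpos := norm_sub_conj_pos hu hw
  rw [pseudoDist, norm_div, div_pow, eq_div_iff (by positivity), sub_mul,
    div_mul_cancel₀ _ (by positivity), one_mul, norm_sub_conj_sq_eq_norm_sub_sq_add]
  ring

theorem pseudoDist_le_one (hu : 0 < u.im) (hw : 0 < w.im) : pseudoDist u w ≤ 1 := by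
  have h := one_sub_pseudoDist_sq hu hw
  have : 0 ≤ 4 * u.im * w.im / ‖u - conj w‖ ^ 2 := by positivity
  nlinarith [pseudoDist_nonneg u w]

theorem pseudoDist_eq_tanh (hu : 0 < u.im) (hw : 0 < w.im) :
    pseudoDist u w = tanh (dist (⟨u, hu⟩ : UpperHalfPlane) ⟨w, hw⟩ / 2) := by
  rw [UpperHalfPlane.tanh_half_dist, Complex.dist_eq, Complex.dist_eq, pseudoDist, norm_div]

theorem pseudoDist_triangle (hu : 0 < u.im) (hv : 0 < v.im) (hw : 0 < w.im) :
    pseudoDist u w ≤ pseudoDist u v + pseudoDist v w := by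
  rw [pseudoDist_eq_tanh hu hw, pseudoDist_eq_tanh hu hv, pseudoDist_eq_tanh hv hw]
  calc _ ≤ tanh (dist (⟨u, hu⟩ : UpperHalfPlane) ⟨v, hv⟩ / 2
          + dist (⟨v, hv⟩ : UpperHalfPlane) ⟨w, hw⟩ / 2) :=
        tanh_le_tanh (by linarith [dist_triangle (⟨u, hu⟩ : UpperHalfPlane) ⟨v, hv⟩ ⟨w, hw⟩])
    _ ≤ _ := tanh_add_le (by positivity) (by positivity)

end PseudoDist

theorem one_sub_sq_le_two_mul_log_inv {x : ℝ} (hx : 0 < x) : 1 - x ^ 2 ≤ 2 * log x⁻¹ := by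
  have h := log_le_sub_one_of_pos (pow_pos hx 2)
  rw [log_pow, Nat.cast_ofNat] at h
  rw [log_inv]
  linarith

theorem exp_neg_four_mul_one_sub_sq_le {x : ℝ} (hx : 1 / 4 ≤ x) (hx1 : x ≤ 1) :
    exp (-(4 * (1 - x ^ 2))) ≤ x := by
  have hx0 : 0 < x := by linarith
  have hlog : -(1 - x) / x ≤ log x := by
    have h := log_le_sub_one_of_pos (inv_pos.2 hx0)
    rw [log_inv] at h
    rw [neg_div, sub_div, div_self hx0.ne', one_div]
    linarith
  have hquarter : -(4 * (1 - x ^ 2)) ≤ -(1 - x) / x := by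
    rw [le_div_iff₀ hx0]
    nlinarith
  exact (exp_le_exp.2 (hquarter.trans hlog)).trans_eq (exp_log hx0)

theorem exp_neg_four_mul_sum_le_prod {ι : Type*} {x : ι → ℝ} {s : Finset ι}
    (hx : ∀ i ∈ s, 1 / 4 ≤ x i) (hx1 : ∀ i ∈ s, x i ≤ 1) :
    exp (-(4 * ∑ i ∈ s, (1 - x i ^ 2))) ≤ ∏ i ∈ s, x i := by
  rw [Finset.mul_sum, ← Finset.sum_neg_distrib, exp_sum]
  exact Finset.prod_le_prod (fun _ _ => (exp_pos _).le)
    fun i hi => exp_neg_four_mul_one_sub_sq_le (hx i hi) (hx1 i hi)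

theorem iInf_mul_pow_le_prod {ι : Type*} {f : ι → ℝ} (hf : ∀ i, 0 ≤ f i) {ε : ℝ} (hε : 0 ≤ ε)
    {s : Finset ι} (hs : s.Nonempty) (hsep : ∀ i ∈ s, ∀ j ∈ s, i ≠ j → 2 * ε ≤ f i + f j) :
    (⨅ i, f i) * ε ^ (s.card - 1) ≤ ∏ i ∈ s, f i := by
  classical
  obtain ⟨m, hm, hmin⟩ := s.exists_min_image f hs
  have hlarge : ∀ j ∈ s.erase m, ε ≤ f j := fun j hj => by
    have := hsep m hm j (Finset.mem_of_mem_erase hj) (Finset.ne_of_mem_erase hj).symm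
    linarith [hmin j (Finset.mem_of_mem_erase hj)]
  rw [← Finset.mul_prod_erase s f hm, ← Finset.card_erase_of_mem hm, ← Finset.prod_const]
  exact mul_le_mul (ciInf_le ⟨0, Set.forall_mem_range.2 hf⟩ m)
    (Finset.prod_le_prod (fun _ _ => hε) hlarge) (Finset.prod_nonneg fun _ _ => hε) (hf m)

section UnitIntervalProduct

variable {ι : Type*} {f : ι → ℝ}

theorem hasProd_iInf_prod (hf0 : ∀ i, 0 ≤ f i) (hf1 : ∀ i, f i ≤ 1) :
    HasProd f (⨅ s : Finset ι, ∏ i ∈ s, f i) := by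
  classical
  refine tendsto_atTop_ciInf (fun s t hst => ?_) ⟨0, ?_⟩
  · rw [← Finset.prod_sdiff hst]
    exact mul_le_of_le_one_left (Finset.prod_nonneg fun i _ => hf0 i)
      (Finset.prod_le_one (fun i _ => hf0 i) fun i _ => hf1 i)
  · rintro _ ⟨s, rfl⟩
    exact Finset.prod_nonneg fun i _ => hf0 i

theorem tprod_le_prod (hf0 : ∀ i, 0 ≤ f i) (hf1 : ∀ i, f i ≤ 1) (s : Finset ι) :
    ∏' i, f i ≤ ∏ i ∈ s, f i := by
  rw [(hasProd_iInf_prod hf0 hf1).tprod_eq]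
  refine ciInf_le ⟨0, ?_⟩ s
  rintro _ ⟨t, rfl⟩
  exact Finset.prod_nonneg fun i _ => hf0 i

theorem le_tprod_of_forall_le_prod (hf0 : ∀ i, 0 ≤ f i) (hf1 : ∀ i, f i ≤ 1) {a : ℝ}
    (h : ∀ s : Finset ι, a ≤ ∏ i ∈ s, f i) : a ≤ ∏' i, f i := by
  rw [(hasProd_iInf_prod hf0 hf1).tprod_eq]
  exact le_ciInf h

end UnitIntervalProduct

/-- The Carleson condition `inf_k ∏_{j ≠ k} ρ(z_k, z_j) ≥ δ`, stated through finite subproducts. -/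
def IsCarleson {ι : Type*} (z : ι → ℂ) (δ : ℝ) : Prop :=
  ∀ k (F : Finset ι), k ∉ F → δ ≤ ∏ j ∈ F, pseudoDist (z k) (z j)

section Carleson

variable {ι : Type*} {z : ι → ℂ} {δ A : ℝ}

theorem isCarleson_of_forall_le_tprod [DecidableEq ι] (hz : ∀ j, 0 < (z j).im)
    (h : ∀ k, δ ≤ ∏' j, if j = k then 1 else pseudoDist (z k) (z j)) : IsCarleson z δ := by
  intro k F hk
  have h0 : ∀ j, 0 ≤ if j = k then 1 else pseudoDist (z k) (z j) := fun j => by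
    split_ifs
    exacts [zero_le_one, pseudoDist_nonneg _ _]
  have h1 : ∀ j, (if j = k then 1 else pseudoDist (z k) (z j)) ≤ 1 := fun j => by
    split_ifs
    exacts [le_rfl, pseudoDist_le_one (hz k) (hz j)]
  refine (h k).trans ((tprod_le_prod h0 h1 F).trans_eq (Finset.prod_congr rfl fun j hj => ?_))
  rw [if_neg (ne_of_mem_of_not_mem hj hk)]

theorem IsCarleson.le_one [Nonempty ι] (h : IsCarleson z δ) : δ ≤ 1 := by
  simpa using h (Classical.arbitrary ι) ∅ (Finset.notMem_empty _)

theorem IsCarleson.le_pseudoDist (h : IsCarleson z δ) {i j : ι} (hij : i ≠ j) :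
    δ ≤ pseudoDist (z i) (z j) := by
  simpa using h i {j} (Finset.notMem_singleton.2 hij)

theorem IsCarleson.sum_one_sub_pseudoDist_sq_le (h : IsCarleson z δ) (hδ : 0 < δ) {k : ι}
    {F : Finset ι} (hk : k ∉ F) : ∑ j ∈ F, (1 - pseudoDist (z k) (z j) ^ 2) ≤ 2 * log δ⁻¹ := by
  have hpos : ∀ j ∈ F, 0 < pseudoDist (z k) (z j) := fun j hj =>
    hδ.trans_le (h.le_pseudoDist (ne_of_mem_of_not_mem hj hk).symm)
  calc ∑ j ∈ F, (1 - pseudoDist (z k) (z j) ^ 2)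
      ≤ ∑ j ∈ F, 2 * log (pseudoDist (z k) (z j))⁻¹ :=
        Finset.sum_le_sum fun j hj => one_sub_sq_le_two_mul_log_inv (hpos j hj)
    _ = 2 * log (∏ j ∈ F, pseudoDist (z k) (z j))⁻¹ := by
        rw [← Finset.mul_sum]
        simp only [log_inv, log_prod fun j hj => (hpos j hj).ne', Finset.sum_neg_distrib]
    _ ≤ 2 * log δ⁻¹ := by
        gcongr
        · exact inv_pos.2 (Finset.prod_pos hpos)
        · exact h k F hk

theorem im_le_two_mul_im_mul_one_sub_pseudoDist_sq {u w : ℂ} (hu : 0 < u.im) (hw : 0 < w.im)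
    (hwu : w.im ≤ u.im) (hre : |u.re - w.re| ≤ 2 * u.im) :
    w.im ≤ 2 * u.im * (1 - pseudoDist u w ^ 2) := by
  have hnorm : ‖u - conj w‖ ^ 2 ≤ 8 * u.im ^ 2 := by
    rw [norm_sub_conj_sq]
    nlinarith [sq_abs (u.re - w.re), abs_nonneg (u.re - w.re)]
  rw [one_sub_pseudoDist_sq hu hw, ← mul_div_assoc,
    le_div_iff₀ (pow_pos (norm_sub_conj_pos hu hw) 2)]
  nlinarith [mul_le_mul_of_nonneg_left hnorm hw.le]

theorem sum_im_le_of_forall_mem_strip (hz : ∀ j, 0 < (z j).im)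
    (hker : ∀ k (F : Finset ι), k ∉ F → ∑ j ∈ F, (1 - pseudoDist (z k) (z j) ^ 2) ≤ A)
    {k : ι} {M : Finset ι} (hkM : k ∈ M)
    (hM : ∀ j ∈ M, (z j).im ≤ (z k).im ∧ |(z k).re - (z j).re| ≤ 2 * (z k).im) :
    ∑ j ∈ M, (z j).im ≤ (1 + 2 * A) * (z k).im := by
  classical
  have hnear : ∀ j ∈ M.erase k, (z j).im ≤ 2 * (z k).im * (1 - pseudoDist (z k) (z j) ^ 2) :=
    fun j hj => im_le_two_mul_im_mul_one_sub_pseudoDist_sq (hz k) (hz j)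
      (hM j (Finset.mem_of_mem_erase hj)).1 (hM j (Finset.mem_of_mem_erase hj)).2
  have hrest := (Finset.sum_le_sum hnear).trans_eq (Finset.mul_sum ..).symm
  have := mul_le_mul_of_nonneg_left (hker k _ (Finset.notMem_erase k M)) (hz k).le
  rw [← Finset.add_sum_erase M _ hkM]
  linarith

theorem sum_im_le_of_forall_mem_box (hz : ∀ j, 0 < (z j).im) (hA : 0 ≤ A)
    (hker : ∀ k (F : Finset ι), k ∉ F → ∑ j ∈ F, (1 - pseudoDist (z k) (z j) ^ 2) ≤ A)
    (F : Finset ι) {l r h : ℝ}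
    (hF : ∀ j ∈ F, l ≤ (z j).re ∧ (z j).re ≤ r ∧ (z j).im ≤ h) :
    ∑ j ∈ F, (z j).im ≤ (1 + 2 * A) * max 0 (r - l + h) := by
  classical
  induction F using Finset.strongInduction generalizing l r h with
  | H F ih =>
  rcases F.eq_empty_or_nonempty with rfl | hne
  · simp only [Finset.sum_empty]
    positivity
  -- Cut out the vertical strip of half-width `2 y` under the highest point `x + i y`;
  -- what remains lies in two boxes of height `y`.
  obtain ⟨k, hkF, hmax⟩ := F.exists_max_image (fun j => (z j).im) hne
  set x := (z k).re
  set y := (z k).im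
  have hy : 0 < y := hz k
  obtain ⟨hlx, hxr, hyh⟩ := hF k hkF
  have hsplit : ∑ j ∈ F, (z j).im
      = ∑ j ∈ F with (z j).re < x - 2 * y, (z j).im
        + (∑ j ∈ F with ¬(z j).re < x - 2 * y ∧ x + 2 * y < (z j).re, (z j).im
          + ∑ j ∈ F with ¬(z j).re < x - 2 * y ∧ ¬x + 2 * y < (z j).re, (z j).im) := by
    rw [← Finset.filter_filter, ← Finset.filter_filter, Finset.sum_filter_add_sum_filter_not,
      Finset.sum_filter_add_sum_filter_not]
  have hL := ih (F.filter fun j => (z j).re < x - 2 * y)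
    (Finset.filter_ssubset.2 ⟨k, hkF, by linarith⟩) (l := l) (r := x - 2 * y) (h := y)
    fun j hj => by
      obtain ⟨hjF, hjx⟩ := Finset.mem_filter.1 hj
      exact ⟨(hF j hjF).1, hjx.le, hmax j hjF⟩
  have hR := ih (F.filter fun j => ¬(z j).re < x - 2 * y ∧ x + 2 * y < (z j).re)
    (Finset.filter_ssubset.2 ⟨k, hkF, by simp only [not_and, not_lt]; intro; linarith⟩)
    (l := x + 2 * y) (r := r) (h := y)
    fun j hj => by
      obtain ⟨hjF, -, hjx⟩ := Finset.mem_filter.1 hj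
      exact ⟨hjx.le, (hF j hjF).2.1, hmax j hjF⟩
  set M := F.filter fun j => ¬(z j).re < x - 2 * y ∧ ¬x + 2 * y < (z j).re
  have hkM : k ∈ M := Finset.mem_filter.2 ⟨hkF, by linarith, by linarith⟩
  have hM : ∑ j ∈ M, (z j).im ≤ (1 + 2 * A) * y :=
    sum_im_le_of_forall_mem_strip hz hker hkM fun j hj => by
      obtain ⟨hjF, hjl, hjr⟩ := Finset.mem_filter.1 hj
      exact ⟨hmax j hjF, abs_le.2 ⟨by linarith, by linarith⟩⟩
  have hwidth : max 0 (x - 2 * y - l + y) + (max 0 (r - (x + 2 * y) + y) + y)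
      ≤ max 0 (r - l + h) := by
    rcases max_cases 0 (x - 2 * y - l + y) with ⟨h1, -⟩ | ⟨h1, -⟩ <;>
    rcases max_cases 0 (r - (x + 2 * y) + y) with ⟨h2, -⟩ | ⟨h2, -⟩ <;>
    · rw [h1, h2]
      linarith [le_max_right 0 (r - l + h)]
  rw [hsplit]
  nlinarith [mul_le_mul_of_nonneg_left hwidth (by positivity : 0 ≤ 1 + 2 * A)]

theorem sum_im_le_of_norm_sub_conj_lt (hz : ∀ j, 0 < (z j).im) (hA : 0 ≤ A)
    (hker : ∀ k (F : Finset ι), k ∉ F → ∑ j ∈ F, (1 - pseudoDist (z k) (z j) ^ 2) ≤ A)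
    {ζ : ℂ} (hζ : 0 ≤ ζ.im) {R : ℝ} (hR : 0 ≤ R) (G : Finset ι)
    (hG : ∀ j ∈ G, ‖ζ - conj (z j)‖ < R) : ∑ j ∈ G, (z j).im ≤ 3 * (1 + 2 * A) * R := by
  have hbox := sum_im_le_of_forall_mem_box hz hA hker G (l := ζ.re - R) (r := ζ.re + R) (h := R)
    fun j hj => by
      have hre : |ζ.re - (z j).re| ≤ ‖ζ - conj (z j)‖ := by
        simpa using Complex.abs_re_le_norm (ζ - conj (z j))
      have him : ζ.im + (z j).im ≤ ‖ζ - conj (z j)‖ := by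
        simpa using Complex.im_le_norm (ζ - conj (z j))
      obtain ⟨h1, h2⟩ := abs_le.1 hre
      have := hG j hj
      exact ⟨by linarith, by linarith, by linarith⟩
  rw [max_eq_right (by linarith)] at hbox
  linarith

theorem sum_one_sub_pseudoDist_sq_le_of_mem_shell (hz : ∀ j, 0 < (z j).im) (hA : 0 ≤ A)
    (hker : ∀ k (F : Finset ι), k ∉ F → ∑ j ∈ F, (1 - pseudoDist (z k) (z j) ^ 2) ≤ A)
    {ζ : ℂ} (hζ : 0 < ζ.im) (m : ℕ) (G : Finset ι)
    (hG : ∀ j ∈ G, 2 ^ m * ζ.im ≤ ‖ζ - conj (z j)‖ ∧ ‖ζ - conj (z j)‖ < 2 ^ (m + 1) * ζ.im) :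
    ∑ j ∈ G, (1 - pseudoDist ζ (z j) ^ 2) ≤ 24 * (1 + 2 * A) * (1 / 2) ^ m := by
  set y := ζ.im
  have hterm : ∀ j ∈ G, 1 - pseudoDist ζ (z j) ^ 2 ≤ 4 / ((2 ^ m) ^ 2 * y) * (z j).im :=
    fun j hj => by
      rw [one_sub_pseudoDist_sq hζ (hz j)]
      calc 4 * y * (z j).im / ‖ζ - conj (z j)‖ ^ 2
          ≤ 4 * y * (z j).im / (2 ^ m * y) ^ 2 := by
            gcongr
            · exact (mul_pos (mul_pos four_pos hζ) (hz j)).le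
            · exact (hG j hj).1
        _ = 4 / ((2 ^ m) ^ 2 * y) * (z j).im := by
            field_simp
  calc ∑ j ∈ G, (1 - pseudoDist ζ (z j) ^ 2)
      ≤ 4 / ((2 ^ m) ^ 2 * y) * ∑ j ∈ G, (z j).im := by
        rw [Finset.mul_sum]
        exact Finset.sum_le_sum hterm
    _ ≤ 4 / ((2 ^ m) ^ 2 * y) * (3 * (1 + 2 * A) * (2 ^ (m + 1) * y)) := by
        gcongr
        exact sum_im_le_of_norm_sub_conj_lt hz hA hker hζ.le (by positivity) G
          fun j hj => (hG j hj).2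
    _ = 24 * (1 + 2 * A) * (1 / 2) ^ m := by
        rw [one_div_pow]
        field_simp
        ring

theorem sum_one_sub_pseudoDist_sq_le (hz : ∀ j, 0 < (z j).im) (hA : 0 ≤ A)
    (hker : ∀ k (F : Finset ι), k ∉ F → ∑ j ∈ F, (1 - pseudoDist (z k) (z j) ^ 2) ≤ A)
    {ζ : ℂ} (hζ : 0 < ζ.im) (F : Finset ι) :
    ∑ j ∈ F, (1 - pseudoDist ζ (z j) ^ 2) ≤ 48 * (1 + 2 * A) := by
  classical
  have hshell : ∀ j, ∃ n : ℕ,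
      2 ^ n * ζ.im ≤ ‖ζ - conj (z j)‖ ∧ ‖ζ - conj (z j)‖ < 2 ^ (n + 1) * ζ.im := fun j => by
    have h1 : 1 ≤ ‖ζ - conj (z j)‖ / ζ.im := by
      rw [le_div_iff₀ hζ, one_mul]
      have := Complex.im_le_norm (ζ - conj (z j))
      simp only [Complex.sub_im, Complex.conj_im, sub_neg_eq_add] at this
      linarith [hz j]
    obtain ⟨n, hn⟩ := exists_nat_pow_near h1 one_lt_two
    exact ⟨n, (le_div_iff₀ hζ).1 hn.1, (div_lt_iff₀ hζ).1 hn.2⟩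
  choose n hn using hshell
  calc ∑ j ∈ F, (1 - pseudoDist ζ (z j) ^ 2)
      = ∑ m ∈ F.image n, ∑ j ∈ F with n j = m, (1 - pseudoDist ζ (z j) ^ 2) :=
        (Finset.sum_fiberwise_of_maps_to (fun j hj => Finset.mem_image_of_mem n hj) _).symm
    _ ≤ ∑ m ∈ F.image n, 24 * (1 + 2 * A) * (1 / 2) ^ m :=
        Finset.sum_le_sum fun m _ => sum_one_sub_pseudoDist_sq_le_of_mem_shell hz hA hker hζ m _
          fun j hj => (Finset.mem_filter.1 hj).2 ▸ hn j
    _ = 24 * (1 + 2 * A) * ∑ m ∈ F.image n, (1 / 2 : ℝ) ^ m := (Finset.mul_sum ..).symm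
    _ ≤ 24 * (1 + 2 * A) * 2 := by
        gcongr
        exact (summable_geometric_two.sum_le_tsum _ fun _ _ => by positivity).trans_eq
          tsum_geometric_two
    _ = 48 * (1 + 2 * A) := by ring

theorem card_sub_one_le_of_pseudoDist_lt_half
    (hker : ∀ k (F : Finset ι), k ∉ F → ∑ j ∈ F, (1 - pseudoDist (z k) (z j) ^ 2) ≤ A)
    {S : Finset ι} (hS : ∀ i ∈ S, ∀ j ∈ S, pseudoDist (z i) (z j) < 1 / 2) :
    S.card - 1 ≤ ⌈4 * A / 3⌉₊ := by
  classical
  rcases S.eq_empty_or_nonempty with rfl | ⟨i, hi⟩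
  · simp
  have hcard : ((S.erase i).card : ℝ) * (3 / 4) ≤ A :=
    calc ((S.erase i).card : ℝ) * (3 / 4) = ∑ _j ∈ S.erase i, (3 / 4 : ℝ) := by
          rw [Finset.sum_const, nsmul_eq_mul]
      _ ≤ ∑ j ∈ S.erase i, (1 - pseudoDist (z i) (z j) ^ 2) :=
          Finset.sum_le_sum fun j hj => by
            nlinarith [hS i hi j (Finset.mem_of_mem_erase hj), pseudoDist_nonneg (z i) (z j)]
      _ ≤ A := hker i _ (Finset.notMem_erase i S)
  have : ((S.erase i).card : ℝ) ≤ ⌈4 * A / 3⌉₊ := by linarith [Nat.le_ceil (4 * A / 3)]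
  rw [← Finset.card_erase_of_mem hi]
  exact_mod_cast this

theorem pow_mul_iInf_le_prod_of_pseudoDist_lt_quarter (hz : ∀ j, 0 < (z j).im)
    (hker : ∀ k (F : Finset ι), k ∉ F → ∑ j ∈ F, (1 - pseudoDist (z k) (z j) ^ 2) ≤ A)
    (hδ : 0 ≤ δ) (hδ1 : δ ≤ 1) (hsep : ∀ i j, i ≠ j → δ ≤ pseudoDist (z i) (z j))
    {ζ : ℂ} (hζ : 0 < ζ.im) {S : Finset ι} (hS : ∀ j ∈ S, pseudoDist ζ (z j) < 1 / 4) :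
    (δ / 2) ^ ⌈4 * A / 3⌉₊ * ⨅ j, pseudoDist ζ (z j) ≤ ∏ j ∈ S, pseudoDist ζ (z j) := by
  have hf0 : ∀ j, 0 ≤ pseudoDist ζ (z j) := fun j => pseudoDist_nonneg _ _
  have hinf0 : 0 ≤ ⨅ j, pseudoDist ζ (z j) := Real.iInf_nonneg hf0
  have htri : ∀ i j, pseudoDist (z i) (z j) ≤ pseudoDist ζ (z i) + pseudoDist ζ (z j) :=
    fun i j => (pseudoDist_comm (z i) ζ ▸ pseudoDist_triangle (hz i) hζ (hz j))
  rcases S.eq_empty_or_nonempty with rfl | hSne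
  · rw [Finset.prod_empty]
    refine mul_le_one₀ (pow_le_one₀ (by positivity) (by linarith)) hinf0 ?_
    rcases isEmpty_or_nonempty ι with hι | ⟨⟨j⟩⟩
    · simp
    · exact (ciInf_le ⟨0, Set.forall_mem_range.2 hf0⟩ j).trans (pseudoDist_le_one hζ (hz j))
  have hcard : S.card - 1 ≤ ⌈4 * A / 3⌉₊ :=
    card_sub_one_le_of_pseudoDist_lt_half hker fun i hi j hj => by
      linarith [htri i j, hS i hi, hS j hj]
  calc (δ / 2) ^ ⌈4 * A / 3⌉₊ * ⨅ j, pseudoDist ζ (z j)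
      ≤ (⨅ j, pseudoDist ζ (z j)) * (δ / 2) ^ (S.card - 1) := by
        rw [mul_comm]
        exact mul_le_mul_of_nonneg_left
          (pow_le_pow_of_le_one (by positivity) (by linarith) hcard) hinf0
    _ ≤ ∏ j ∈ S, pseudoDist ζ (z j) :=
        iInf_mul_pow_le_prod hf0 (by positivity) hSne fun i _ j _ hij => by
          linarith [htri i j, hsep i j hij]

theorem const_mul_iInf_le_prod (hz : ∀ j, 0 < (z j).im) (hA : 0 ≤ A)
    (hker : ∀ k (F : Finset ι), k ∉ F → ∑ j ∈ F, (1 - pseudoDist (z k) (z j) ^ 2) ≤ A)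
    (hδ : 0 ≤ δ) (hδ1 : δ ≤ 1) (hsep : ∀ i j, i ≠ j → δ ≤ pseudoDist (z i) (z j))
    {ζ : ℂ} (hζ : 0 < ζ.im) (F : Finset ι) :
    (δ / 2) ^ ⌈4 * A / 3⌉₊ * exp (-(192 * (1 + 2 * A))) * ⨅ j, pseudoDist ζ (z j)
      ≤ ∏ j ∈ F, pseudoDist ζ (z j) := by
  classical
  have hnear := pow_mul_iInf_le_prod_of_pseudoDist_lt_quarter hz hker hδ hδ1 hsep hζ
    (S := F.filter fun j => pseudoDist ζ (z j) < 1 / 4) fun j hj => (Finset.mem_filter.1 hj).2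
  have hfar : exp (-(192 * (1 + 2 * A)))
      ≤ ∏ j ∈ F with ¬pseudoDist ζ (z j) < 1 / 4, pseudoDist ζ (z j) := by
    refine le_trans ?_ (exp_neg_four_mul_sum_le_prod
      (fun j hj => not_lt.1 (Finset.mem_filter.1 hj).2) fun j _ => pseudoDist_le_one hζ (hz j))
    refine exp_le_exp.2 (neg_le_neg ?_)
    linarith [sum_one_sub_pseudoDist_sq_le hz hA hker hζ
      (F.filter fun j => ¬pseudoDist ζ (z j) < 1 / 4)]
  rw [← Finset.prod_filter_mul_prod_filter_not F fun j => pseudoDist ζ (z j) < 1 / 4]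
  calc _ = (δ / 2) ^ ⌈4 * A / 3⌉₊ * (⨅ j, pseudoDist ζ (z j)) * exp (-(192 * (1 + 2 * A))) := by
        ring
    _ ≤ _ := mul_le_mul hnear hfar (exp_pos _).le
        (Finset.prod_nonneg fun j _ => pseudoDist_nonneg _ _)

end Carleson

theorem stmt_7_general (z : ℕ → ℂ) (hz : ∀ k, 0 < (z k).im)
    (δ₀ : ℝ) (hδ₀ : 0 < δ₀)
    (hCarleson : ∀ k, δ₀ ≤ ∏' j, if j = k then 1 else ‖(z k - z j) / (z k - conj (z j))‖) :
    ∃ c > 0, ∀ ζ : ℂ, 0 < ζ.im →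
      c * ⨅ j, ‖(ζ - z j) / (ζ - conj (z j))‖ ≤ ∏' j, ‖(ζ - z j) / (ζ - conj (z j))‖ := by
  have hC : IsCarleson z δ₀ := isCarleson_of_forall_le_tprod hz hCarleson
  have hδ₁ : δ₀ ≤ 1 := hC.le_one
  set A := 2 * log δ₀⁻¹
  have hA : 0 ≤ A := mul_nonneg zero_le_two (log_nonneg ((one_le_inv₀ hδ₀).2 hδ₁))
  refine ⟨(δ₀ / 2) ^ ⌈4 * A / 3⌉₊ * exp (-(192 * (1 + 2 * A))), by positivity, fun ζ hζ => ?_⟩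
  exact le_tprod_of_forall_le_prod (fun j => pseudoDist_nonneg ζ (z j))
    (fun j => pseudoDist_le_one hζ (hz j))
    (const_mul_iInf_le_prod hz hA (fun k F hk => hC.sum_one_sub_pseudoDist_sq_le hδ₀ hk)
      hδ₀.le hδ₁ (fun i j hij => hC.le_pseudoDist hij) hζ)

/-- For a Carleson sequence `{z_k}` in the upper half-plane with Carleson constant `δ₀`,
there is `c = c(δ₀) > 0` with `∏_w |b_w(z)| ≥ c · inf_w |b_w(z)|` for all `z ∈ ℂ₊`. -/
theorem stmt_7 (z : ℕ → ℂ) (hz : ∀ k, 0 < (z k).im)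
    (hBlaschke : Summable fun k => (z k).im / (1 + ‖z k‖ ^ 2))
    (δ₀ : ℝ) (hδ₀ : 0 < δ₀)
    (hCarleson : ∀ k, δ₀ ≤ ∏' j, if j = k then 1 else ‖(z k - z j) / (z k - conj (z j))‖) :
    ∃ c > 0, ∀ ζ : ℂ, 0 < ζ.im →
      c * ⨅ j, ‖(ζ - z j) / (ζ - conj (z j))‖ ≤ ∏' j, ‖(ζ - z j) / (ζ - conj (z j))‖ :=
  stmt_7_general z hz δ₀ hδ₀ hCarleson
end

section
/- Let μ be a finite positive measure on [0,1], M = μ([0,1]). Define φ(x) = μ([0,x)) + ½μ({x}) for x > 0, φ(0) = ½μ({0}), and ψ(t) = inf{x : μ([0,x)) > t} for t < μ([0,1)), ψ(t) = 1 for t ≥ μ([0,1)). Then for every f ∈ L¹(μ) and every x ∈ [0,1], ∫_0^{φ(x)} f(ψ(t)) dt = ∫_{[0,x)} f dμ + ½ μ({x}) f(x). -/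
/-!
With `F y = μ (-∞, y)` (which is `μ [0, y)` here) and `M = μ ℝ`, the function `ψ` is the
generalized inverse of the left-continuous function `F`: for `0 < t < M`,
`ψ t < y ↔ t < F y`. Hence `ψ` pushes Lebesgue measure on `(0, M)` forward to `μ`, since both
give mass `F y` to every `(-∞, y)`; this turns `∫_{[0,x)} f dμ` into `∫_0^{F x} f ∘ ψ`.
On `(F x, F x + μ {x})` the function `ψ` is constantly `x`, which gives the atom term.
-/

open MeasureTheory Set Filter Topology

lemma Ico_ae_eq_Iio {μ : Measure ℝ} {a b : ℝ} (ha : μ (Iio a) = 0) :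
    Ico a b =ᵐ[μ] Iio b := by
  have : Ici a =ᵐ[μ] univ := ae_eq_univ.2 (by rwa [compl_Ici])
  simpa [Ici_inter_Iio] using this.inter (ae_eq_refl (Iio b))

lemma exists_lt_lt_measureReal_Iio {μ : Measure ℝ} [IsFiniteMeasure μ] {t y : ℝ}
    (h : t < μ.real (Iio y)) : ∃ w < y, t < μ.real (Iio w) := by
  obtain ⟨u, hu_mono, hu_lt, hu_lim⟩ := exists_seq_strictMono_tendsto y
  have hU : ⋃ n, Iio (u n) = Iio y :=
    (isLUB_of_tendsto_atTop hu_mono.monotone hu_lim).iUnion_Iio_eq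
  have hlim : Tendsto (fun n => μ.real (Iio (u n))) atTop (𝓝 (μ.real (Iio y))) := by
    rw [← hU]
    exact (ENNReal.tendsto_toReal (measure_ne_top _ _)).comp
      (tendsto_measure_iUnion_atTop fun m n hmn => Iio_subset_Iio (hu_mono.monotone hmn))
  obtain ⟨n, hn⟩ := (hlim.eventually_const_lt h).exists
  exact ⟨u n, hu_lt n, hn⟩

lemma csInf_setOf_lt_lt_iff {α β : Type*} [ConditionallyCompleteLinearOrder α] [Preorder β]
    {F : α → β} {t : β} (hF : Monotone F) (hleft : ∀ y, t < F y → ∃ w < y, t < F w)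
    (hne : ∃ w, t < F w) (hbdd : BddBelow {w | t < F w}) (y : α) :
    sInf {w | t < F w} < y ↔ t < F y := by
  constructor
  · intro h
    obtain ⟨w, hw, hwy⟩ := exists_lt_of_csInf_lt hne h
    exact lt_of_lt_of_le hw (hF hwy.le)
  · intro h
    obtain ⟨w, hwy, hw⟩ := hleft y h
    exact (csInf_le hbdd hw).trans_lt hwy

def IsQuantileFunction (μ : Measure ℝ) (ψ : ℝ → ℝ) : Prop :=
  ∀ t ∈ Ioo 0 (μ.real univ), ∀ y, ψ t < y ↔ t < μ.real (Iio y)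

namespace IsQuantileFunction

variable {μ : Measure ℝ} {ψ : ℝ → ℝ}

lemma monotoneOn (hψ : IsQuantileFunction μ ψ) : MonotoneOn ψ (Ioo 0 (μ.real univ)) := by
  intro s hs t ht hst
  by_contra! h
  have hts : t < μ.real (Iio (ψ s)) := (hψ t ht (ψ s)).1 h
  exact lt_irrefl _ ((hψ s hs (ψ s)).2 (hst.trans_lt hts))

lemma aemeasurable (hψ : IsQuantileFunction μ ψ) :
    AEMeasurable ψ (volume.restrict (Ioo 0 (μ.real univ))) :=
  aemeasurable_restrict_of_monotoneOn measurableSet_Ioo hψ.monotoneOn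

variable [IsFiniteMeasure μ]

lemma preimage_Iio_inter (hψ : IsQuantileFunction μ ψ) (y : ℝ) :
    ψ ⁻¹' Iio y ∩ Ioo 0 (μ.real univ) = Ioo 0 (μ.real (Iio y)) := by
  ext t
  constructor
  · rintro ⟨hlt, ht⟩
    exact ⟨ht.1, (hψ t ht y).1 hlt⟩
  · rintro ⟨ht0, hty⟩
    have ht : t ∈ Ioo 0 (μ.real univ) :=
      ⟨ht0, hty.trans_le (measureReal_mono (subset_univ _))⟩
    exact ⟨(hψ t ht y).2 hty, ht⟩

lemma map_volume_restrict (hψ : IsQuantileFunction μ ψ) :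
    (volume.restrict (Ioo 0 (μ.real univ))).map ψ = μ := by
  have hvol : ∀ s, volume (Ioo 0 (μ.real s)) = μ s := fun s => by
    rw [Real.volume_Ioo, sub_zero, ofReal_measureReal]
  refine (ext_of_generate_finite _
    (BorelSpace.measurable_eq.trans (borel_eq_generateFrom_Iio ℝ)) isPiSystem_Iio ?_ ?_).symm
  · rintro _ ⟨y, rfl⟩
    rw [Measure.map_apply_of_aemeasurable hψ.aemeasurable measurableSet_Iio,
      Measure.restrict_apply' measurableSet_Ioo, hψ.preimage_Iio_inter, hvol]
  · rw [Measure.map_apply_of_aemeasurable hψ.aemeasurable MeasurableSet.univ, preimage_univ,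
      Measure.restrict_apply_univ, hvol]

lemma integrableOn_comp (hψ : IsQuantileFunction μ ψ) {f : ℝ → ℝ} (hf : Integrable f μ) :
    IntegrableOn (fun t => f (ψ t)) (Ioo 0 (μ.real univ)) := by
  rw [← hψ.map_volume_restrict] at hf
  exact (integrable_map_measure hf.aestronglyMeasurable hψ.aemeasurable).1 hf

lemma setIntegral_Ioo_comp (hψ : IsQuantileFunction μ ψ) {f : ℝ → ℝ} (hf : Integrable f μ)
    (y : ℝ) : ∫ t in Ioo 0 (μ.real (Iio y)), f (ψ t) = ∫ s in Iio y, f s ∂μ := by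
  have hf' : AEStronglyMeasurable f ((volume.restrict (Ioo 0 (μ.real univ))).map ψ) := by
    rw [hψ.map_volume_restrict]; exact hf.aestronglyMeasurable
  calc ∫ t in Ioo 0 (μ.real (Iio y)), f (ψ t)
      = ∫ t in ψ ⁻¹' Iio y, f (ψ t) ∂(volume.restrict (Ioo 0 (μ.real univ))) := by
        rw [Measure.restrict_restrict' measurableSet_Ioo, hψ.preimage_Iio_inter]
    _ = ∫ s in Iio y, f s ∂((volume.restrict (Ioo 0 (μ.real univ))).map ψ) :=
        (setIntegral_map measurableSet_Iio hf' hψ.aemeasurable).symm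
    _ = ∫ s in Iio y, f s ∂μ := by rw [hψ.map_volume_restrict]

lemma eq_of_mem_Ioo (hψ : IsQuantileFunction μ ψ) {t y : ℝ}
    (ht : t ∈ Ioo (μ.real (Iio y)) (μ.real (Iic y))) : ψ t = y := by
  have ht' : t ∈ Ioo 0 (μ.real univ) :=
    ⟨measureReal_nonneg.trans_lt ht.1, ht.2.trans_le (measureReal_mono (subset_univ _))⟩
  refine le_antisymm (le_of_forall_gt fun c hc => ?_) (not_lt.1 fun h => ?_)
  · exact (hψ t ht' c).2 (ht.2.trans_le (measureReal_mono (Iic_subset_Iio.2 hc)))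
  · exact ht.1.not_gt ((hψ t ht' y).1 h)

lemma setIntegral_Ioc_comp (hψ : IsQuantileFunction μ ψ) {f : ℝ → ℝ} (hf : Integrable f μ)
    (x : ℝ) :
    ∫ t in Ioc 0 (μ.real (Iio x) + μ.real {x} / 2), f (ψ t) =
      (∫ s in Iio x, f s ∂μ) + μ.real {x} / 2 * f x := by
  set a := μ.real (Iio x)
  set b := a + μ.real {x} / 2 with hb
  have hIic : μ.real (Iic x) = a + μ.real {x} := by
    rw [← Iio_insert, insert_eq, union_comm,
      measureReal_union (by simp) (measurableSet_singleton x)]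
  have hatom : ∀ t ∈ Ioc a b, ψ t = x := fun t ht =>
    hψ.eq_of_mem_Ioo ⟨ht.1, by linarith [ht.1, ht.2, hb]⟩
  have hab : a ≤ b := le_add_of_nonneg_right (by positivity)
  have hbM : b ≤ μ.real univ := by
    linarith [measureReal_mono (μ := μ) (subset_univ (Iic x)),
      measureReal_nonneg (μ := μ) (s := {x})]
  have hint : IntegrableOn (fun t => f (ψ t)) (Ioc 0 (μ.real univ)) :=
    (integrableOn_Ioc_iff_integrableOn_Ioo (by simp)).2 (hψ.integrableOn_comp hf)
  rw [← Ioc_union_Ioc_eq_Ioc measureReal_nonneg hab,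
    setIntegral_union (Ioc_disjoint_Ioc_of_le le_rfl) measurableSet_Ioc
      (hint.mono_set (Ioc_subset_Ioc le_rfl (hab.trans hbM)))
      (hint.mono_set (Ioc_subset_Ioc measureReal_nonneg hbM)),
    integral_Ioc_eq_integral_Ioo, hψ.setIntegral_Ioo_comp hf,
    setIntegral_congr_fun measurableSet_Ioc (fun t ht => congrArg f (hatom t ht)),
    setIntegral_const, Real.volume_real_Ioc, add_sub_cancel_left, max_eq_left (by positivity),
    smul_eq_mul]

end IsQuantileFunction

lemma isQuantileFunction_of_sInf {μ : Measure ℝ} [IsFiniteMeasure μ] {a b : ℝ}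
    (hsupp : μ (Icc a b)ᶜ = 0) {ψ : ℝ → ℝ}
    (hψ : ∀ t < μ.real (Iio b), ψ t = sInf {y | t < μ.real (Iio y)})
    (hψb : ∀ t, μ.real (Iio b) ≤ t → ψ t = b) : IsQuantileFunction μ ψ := by
  intro t ht y
  have hmono : Monotone fun y => μ.real (Iio y) := fun y z h => measureReal_mono (Iio_subset_Iio h)
  rcases lt_or_ge t (μ.real (Iio b)) with htb | htb
  · have hbdd : BddBelow {w | t < μ.real (Iio w)} := by
      refine ⟨a, fun w (hw : t < μ.real (Iio w)) => not_lt.1 fun hwa => hw.not_ge ?_⟩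
      have hnull : μ (Iio w) = 0 :=
        measure_mono_null
          (fun z (hz : z < w) hz' => not_le.2 (hz.trans hwa) (mem_Icc.1 hz').1) hsupp
      rw [measureReal_def, hnull]
      exact ht.1.le
    rw [hψ t htb]
    exact csInf_setOf_lt_lt_iff hmono (fun y => exists_lt_lt_measureReal_Iio) ⟨b, htb⟩ hbdd y
  · rw [hψb t htb]
    refine ⟨fun hby => ?_, fun hty => not_le.1 fun hyb => (htb.trans_lt hty).not_ge (hmono hyb)⟩
    have hnull : μ (Iio y)ᶜ = 0 :=
      measure_mono_null (fun z (hz : ¬ z < y) hz' => hz ((mem_Icc.1 hz').2.trans_lt hby)) hsupp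
    rw [measureReal_congr (ae_eq_univ.2 hnull)]
    exact ht.2

/-- Change of variables: for a finite measure `μ` on `[0,1]`, with
`φ(x) = μ[0,x) + ½μ{x}` and `ψ(t) = inf{x : μ[0,x) > t}` (and `ψ(t) = 1` for
`t ≥ μ[0,1)`), one has `∫_0^{φ(x)} f(ψ(t)) dt = ∫_{[0,x)} f dμ + ½ μ{x} f(x)`. -/
theorem stmt_8 (μ : Measure ℝ) [IsFiniteMeasure μ] (hsupp : μ (Icc (0:ℝ) 1)ᶜ = 0)
    (φ ψ : ℝ → ℝ)
    (hφ0 : φ 0 = (μ {0}).toReal / 2)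
    (hφ : ∀ x : ℝ, 0 < x → φ x = (μ (Ico 0 x)).toReal + (μ {x}).toReal / 2)
    (hψ : ∀ t : ℝ, t < (μ (Ico (0:ℝ) 1)).toReal →
      ψ t = sInf {x : ℝ | t < (μ (Ico 0 x)).toReal})
    (hψ1 : ∀ t : ℝ, (μ (Ico (0:ℝ) 1)).toReal ≤ t → ψ t = 1)
    (f : ℝ → ℝ) (hf : Integrable f μ)
    (x : ℝ) (hx : x ∈ Icc (0:ℝ) 1) :
    ∫ t in Ioc 0 (φ x), f (ψ t) =
      (∫ s in Ico 0 x, f s ∂μ) + (μ {x}).toReal / 2 * f x := by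
  have hneg : μ (Iio 0) = 0 :=
    measure_mono_null (fun z (hz : z < 0) hz' => not_le.2 hz (mem_Icc.1 hz').1) hsupp
  have hIco : ∀ y, Ico 0 y =ᵐ[μ] Iio y := fun y => Ico_ae_eq_Iio hneg
  have hIco_real : ∀ y, (μ (Ico 0 y)).toReal = μ.real (Iio y) := fun y =>
    measureReal_congr (hIco y)
  have hφx : φ x = μ.real (Iio x) + μ.real {x} / 2 := by
    rcases hx.1.eq_or_lt with rfl | hx0
    · rw [hφ0, ← hIco_real, Ico_self, measure_empty, ENNReal.toReal_zero, zero_add]; rfl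
    · rw [hφ x hx0, hIco_real]; rfl
  simp only [hIco_real] at hψ hψ1
  have hq : IsQuantileFunction μ ψ := isQuantileFunction_of_sInf hsupp hψ hψ1
  rw [hφx, hq.setIntegral_Ioc_comp hf, setIntegral_congr_set (hIco x)]
  rfl
end

section
/- Let H, E be separable Hilbert spaces, (Ω, μ) a finite measure space, and c : E → L²(H, μ) a Hilbert–Schmidt operator. Then there exists a μ-measurable family of operators c(x) : E → H, defined for μ-a.e. x, such that (c e)(x) = c(x)e for all e ∈ E and μ-a.e. x, each c(x) is Hilbert–Schmidt, and ∫ ‖c(x)‖²_{S₂} dμ(x) = ‖c‖²_{S₂}. -/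
/-!
Take for `C x` the operator sending the `j`-th basis vector to `(c eⱼ)(x)`. It is a bounded
(indeed Hilbert–Schmidt) operator wherever `∑ⱼ ‖(c eⱼ)(x)‖² < ∞`, and this holds almost everywhere
because, by monotone convergence, `∫ ∑ⱼ ‖(c eⱼ)(x)‖² dμ = ∑ⱼ ‖c eⱼ‖² < ∞`; the same computation gives
the integral identity. For `e = ∑ⱼ ⟪eⱼ, e⟫ eⱼ`, Cauchy–Schwarz makes `∑ⱼ ⟪eⱼ, e⟫ c eⱼ` converge
absolutely in `L²`, hence almost everywhere pointwise; its pointwise sum is `C x e`, its `L²` sum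
is `c e`.
-/

open MeasureTheory

theorem summable_mul_and_tsum_mul_le_sqrt_mul_sqrt {ι : Type*} {f g : ι → ℝ}
    (hf : ∀ i, 0 ≤ f i) (hg : ∀ i, 0 ≤ g i)
    (hf2 : Summable fun i => f i ^ 2) (hg2 : Summable fun i => g i ^ 2) :
    (Summable fun i => f i * g i) ∧
      ∑' i, f i * g i ≤ √(∑' i, f i ^ 2) * √(∑' i, g i ^ 2) := by
  simp only [← Real.rpow_two] at hf2 hg2 ⊢
  simpa only [Real.sqrt_eq_rpow, one_div] using
    Real.summable_and_inner_le_Lp_mul_Lq_tsum_of_nonneg .two_two hf hg hf2 hg2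

namespace HilbertBasis
variable {ι 𝕜 E H : Type*} [RCLike 𝕜] [NormedAddCommGroup E] [InnerProductSpace 𝕜 E]
  [NormedAddCommGroup H] [NormedSpace 𝕜 H] (b : HilbertBasis ι 𝕜 E)

theorem summable_norm_repr_sq (e : E) : Summable fun i => ‖b.repr e i‖ ^ 2 := by
  simpa using (lp.memℓp (b.repr e)).summable (by norm_num : 0 < (2 : ENNReal).toReal)

theorem tsum_norm_repr_sq (e : E) : ∑' i, ‖b.repr e i‖ ^ 2 = ‖e‖ ^ 2 := by
  simpa [b.repr.norm_map] using
    (lp.norm_rpow_eq_tsum (by norm_num : 0 < (2 : ENNReal).toReal) (b.repr e)).symm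

variable {a : ι → H}

theorem summable_norm_repr_smul (ha : Summable fun i => ‖a i‖ ^ 2) (e : E) :
    Summable fun i => ‖b.repr e i • a i‖ := by
  simpa only [norm_smul] using (summable_mul_and_tsum_mul_le_sqrt_mul_sqrt
    (fun _ => norm_nonneg _) (fun _ => norm_nonneg _) (b.summable_norm_repr_sq e) ha).1

theorem norm_tsum_repr_smul_le (ha : Summable fun i => ‖a i‖ ^ 2) (e : E) :
    ‖∑' i, b.repr e i • a i‖ ≤ √(∑' i, ‖a i‖ ^ 2) * ‖e‖ :=
  calc ‖∑' i, b.repr e i • a i‖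
      _ ≤ ∑' i, ‖b.repr e i‖ * ‖a i‖ := by
        simpa only [norm_smul] using norm_tsum_le_tsum_norm (b.summable_norm_repr_smul ha e)
      _ ≤ √(∑' i, ‖b.repr e i‖ ^ 2) * √(∑' i, ‖a i‖ ^ 2) :=
        (summable_mul_and_tsum_mul_le_sqrt_mul_sqrt (fun _ => norm_nonneg _)
          (fun _ => norm_nonneg _) (b.summable_norm_repr_sq e) ha).2
      _ = √(∑' i, ‖a i‖ ^ 2) * ‖e‖ := by
        rw [tsum_norm_repr_sq, Real.sqrt_sq (norm_nonneg e), mul_comm]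

variable [CompleteSpace H]

open Classical in
noncomputable def constr (a : ι → H) : E →L[𝕜] H :=
  if ha : Summable fun i => ‖a i‖ ^ 2 then
    LinearMap.mkContinuous
      { toFun := fun e => ∑' i, b.repr e i • a i
        map_add' := fun e f => by
          simp only [map_add, lp.coeFn_add, Pi.add_apply, add_smul]
          exact (b.summable_norm_repr_smul ha e).of_norm.tsum_add
            (b.summable_norm_repr_smul ha f).of_norm
        map_smul' := fun r e => by
          simp only [map_smul, lp.coeFn_smul, Pi.smul_apply, smul_eq_mul, mul_smul,
            RingHom.id_apply]
          exact (b.summable_norm_repr_smul ha e).of_norm.tsum_const_smul r }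
      (√(∑' i, ‖a i‖ ^ 2)) (b.norm_tsum_repr_smul_le ha)
  else 0

theorem constr_apply (ha : Summable fun i => ‖a i‖ ^ 2) (e : E) :
    b.constr a e = ∑' i, b.repr e i • a i := by
  simp [constr, ha]

theorem constr_apply_self (ha : Summable fun i => ‖a i‖ ^ 2) (i : ι) : b.constr a (b i) = a i := by
  classical
  rw [b.constr_apply ha, b.repr_self, tsum_eq_single i fun j hj => by simp [hj]]
  simp

end HilbertBasis

namespace MeasureTheory.L2
variable {H : Type*} [NormedAddCommGroup H] {Ω : Type*} [MeasurableSpace Ω] {μ : Measure Ω}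

theorem lintegral_enorm_sq (g : Lp H 2 μ) : ∫⁻ x, ‖g x‖ₑ ^ 2 ∂μ = ‖g‖ₑ ^ 2 := by
  have := eLpNorm_nnreal_pow_eq_lintegral (f := (g : Ω → H)) (μ := μ) (p := 2) two_ne_zero
  simp only [NNReal.coe_ofNat, ENNReal.rpow_two] at this
  rw [Lp.enorm_def]; exact_mod_cast this.symm

theorem lintegral_enorm_norm_sq (g : Lp H 2 μ) :
    ∫⁻ x, ‖‖g x‖ ^ 2‖ₑ ∂μ = ‖‖g‖ ^ 2‖ₑ := by
  simpa only [enorm_pow, enorm_norm] using lintegral_enorm_sq g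

theorem integral_norm_sq (g : Lp H 2 μ) : ∫ x, ‖g x‖ ^ 2 ∂μ = ‖g‖ ^ 2 := by
  have := integral_norm_eq_lintegral_enorm ((Lp.aestronglyMeasurable g).norm.pow 2)
  simp only [Pi.pow_apply, norm_pow, norm_norm] at this
  rw [this, lintegral_enorm_norm_sq, toReal_enorm, norm_pow, norm_norm]

theorem tsum_lintegral_enorm_norm_sq_ne_top {ι : Type*} {g : ι → Lp H 2 μ}
    (hg : Summable fun i => ‖g i‖ ^ 2) : ∑' i, ∫⁻ x, ‖‖g i x‖ ^ 2‖ₑ ∂μ ≠ ⊤ := by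
  simp only [lintegral_enorm_norm_sq]
  exact tsum_enorm_ne_top_iff_summable_norm.2 <| by simpa only [norm_pow, norm_norm] using hg

theorem aestronglyMeasurable_norm_sq (g : Lp H 2 μ) :
    AEStronglyMeasurable (fun x => ‖g x‖ ^ 2) μ :=
  (Lp.aestronglyMeasurable g).norm.pow 2

theorem ae_summable_norm_sq {ι : Type*} [Countable ι] {g : ι → Lp H 2 μ}
    (hg : Summable fun i => ‖g i‖ ^ 2) : ∀ᵐ x ∂μ, Summable fun i => ‖g i x‖ ^ 2 := by
  have := summable_norm_of_tsum_eLpNorm_ne_top le_rfl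
    (fun i => aestronglyMeasurable_norm_sq (g i))
    (by simpa only [eLpNorm_one_eq_lintegral_enorm] using tsum_lintegral_enorm_norm_sq_ne_top hg)
  simpa only [norm_pow, norm_norm] using this

theorem integral_tsum_norm_sq {ι : Type*} [Countable ι] {g : ι → Lp H 2 μ}
    (hg : Summable fun i => ‖g i‖ ^ 2) : ∫ x, ∑' i, ‖g i x‖ ^ 2 ∂μ = ∑' i, ‖g i‖ ^ 2 := by
  rw [integral_tsum (fun i => aestronglyMeasurable_norm_sq (g i))
    (tsum_lintegral_enorm_norm_sq_ne_top hg)]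
  simp only [integral_norm_sq]

end MeasureTheory.L2

theorem MeasureTheory.Lp.ae_hasSum_of_hasSum {ι E Ω : Type*} [Countable ι] [NormedAddCommGroup E]
    [CompleteSpace E] [MeasurableSpace Ω] {μ : Measure Ω} {p : ENNReal} [Fact (1 ≤ p)]
    {f : ι → Lp E p μ} {g : Lp E p μ} (hfg : HasSum f g) (hf : Summable fun i => ‖f i‖) :
    ∀ᵐ x ∂μ, HasSum (fun i => f i x) (g x) := by
  simpa only [hfg.tsum_eq] using Lp.hasSum_coeFn_tsum (tsum_enorm_ne_top_iff_summable_norm.2 hf)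

theorem HilbertBasis.ae_hasSum_repr_smul_apply {ι 𝕜 E H Ω : Type*} [Countable ι] [RCLike 𝕜]
    [NormedAddCommGroup E] [InnerProductSpace 𝕜 E] [NormedAddCommGroup H] [NormedSpace 𝕜 H]
    [CompleteSpace H] [MeasurableSpace Ω] {μ : Measure Ω} {p : ENNReal} [Fact (1 ≤ p)]
    (b : HilbertBasis ι 𝕜 E) {c : E →L[𝕜] Lp H p μ} (hc : Summable fun i => ‖c (b i)‖ ^ 2)
    (e : E) : ∀ᵐ x ∂μ, HasSum (fun i => b.repr e i • c (b i) x) (c e x) := by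
  have hsum : HasSum (fun i => b.repr e i • c (b i)) (c e) := by
    simpa only [map_smul] using (b.hasSum_repr e).mapL c
  filter_upwards [Lp.ae_hasSum_of_hasSum hsum (b.summable_norm_repr_smul hc e),
    ae_all_iff.2 fun i => Lp.coeFn_smul (b.repr e i) (c (b i))] with x hx hsmul
  simpa only [hsmul, Pi.smul_apply] using hx

theorem stmt_10_general {E H : Type*} [NormedAddCommGroup E] [InnerProductSpace ℂ E]
    [NormedAddCommGroup H] [InnerProductSpace ℂ H] [CompleteSpace H]
    {Ω : Type*} [MeasurableSpace Ω] (μ : Measure Ω)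
    (bE : HilbertBasis ℕ ℂ E)
    (c : E →L[ℂ] (Lp H 2 μ))
    (hHS : Summable fun j => ‖c (bE j)‖ ^ 2) :
    ∃ C : Ω → (E →L[ℂ] H),
      (∀ e : E, AEStronglyMeasurable (fun x => C x e) μ) ∧
      (∀ e : E, ∀ᵐ x ∂μ, (c e : Ω → H) x = C x e) ∧
      (∀ᵐ x ∂μ, Summable fun j => ‖C x (bE j)‖ ^ 2) ∧
      ∫ x, (∑' j, ‖C x (bE j)‖ ^ 2) ∂μ = ∑' j, ‖c (bE j)‖ ^ 2 := by
  set C : Ω → (E →L[ℂ] H) := fun x => bE.constr fun j => c (bE j) x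
  have hfibre := L2.ae_summable_norm_sq hHS
  have hbasis : ∀ᵐ x ∂μ, ∀ j, C x (bE j) = c (bE j) x := by
    filter_upwards [hfibre] with x hx using bE.constr_apply_self hx
  have hcoe : ∀ e, ∀ᵐ x ∂μ, (c e : Ω → H) x = C x e := fun e => by
    filter_upwards [hfibre, bE.ae_hasSum_repr_smul_apply hHS e] with x hx hsum
    rw [bE.constr_apply hx]
    exact hsum.tsum_eq.symm
  refine ⟨C, fun e => (Lp.aestronglyMeasurable (c e)).congr (hcoe e), hcoe, ?_, ?_⟩
  · filter_upwards [hfibre, hbasis] with x hx hb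
    simpa only [hb] using hx
  · rw [← L2.integral_tsum_norm_sq hHS]
    refine integral_congr_ae ?_
    filter_upwards [hbasis] with x hb
    simp only [hb]

/-- A Hilbert–Schmidt operator `c : E → L²(H, μ)` is given by a measurable family of
Hilbert–Schmidt operators `c(x) : E → H` with `(c e)(x) = c(x) e` a.e. and
`∫ ‖c(x)‖²_{S₂} dμ = ‖c‖²_{S₂}`. -/
theorem stmt_10 {E H : Type*} [NormedAddCommGroup E] [InnerProductSpace ℂ E] [CompleteSpace E]
    [NormedAddCommGroup H] [InnerProductSpace ℂ H] [CompleteSpace H]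
    {Ω : Type*} [MeasurableSpace Ω] (μ : Measure Ω) [IsFiniteMeasure μ]
    (bE : HilbertBasis ℕ ℂ E)
    (c : E →L[ℂ] (Lp H 2 μ))
    (hHS : Summable fun j => ‖c (bE j)‖ ^ 2) :
    ∃ C : Ω → (E →L[ℂ] H),
      (∀ e : E, AEStronglyMeasurable (fun x => C x e) μ) ∧
      (∀ e : E, ∀ᵐ x ∂μ, (c e : Ω → H) x = C x e) ∧
      (∀ᵐ x ∂μ, Summable fun j => ‖C x (bE j)‖ ^ 2) ∧
      ∫ x, (∑' j, ‖C x (bE j)‖ ^ 2) ∂μ = ∑' j, ‖c (bE j)‖ ^ 2 :=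
  stmt_10_general μ bE c hHS
end

section
/- Let α be a selfadjoint operator on a Hilbert space H, c : E → H Hilbert–Schmidt with cc* = k, μ₀ > 0, and z ∈ ℂ₊ with Im z ≥ 1 + ½ μ₀‖k‖. Then for all t with |t| ≤ ½μ₀, the operator t·k + i(α − zI) is boundedly invertible, and ‖(t·k + i(α − zI))⁻¹‖ ≤ 1, ‖c*(t·k + i(α − zI))⁻¹c‖ ≤ ‖k‖, and ‖c*(t·k + i(α − zI))⁻¹c‖_{S₁} ≤ ‖k‖_{S₁}. -/
open ContinuousLinearMap

/-- The trace norm (Schatten `S₁` norm) of an operator, via its characterization as the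
supremum over pairs of finite orthonormal families of `Σ_j |⟨f_j, T e_j⟩|`. -/
noncomputable def traceNorm {F : Type*} [NormedAddCommGroup F] [InnerProductSpace ℂ F]
    (T : F →L[ℂ] F) : ENNReal :=
  ⨆ (n : ℕ) (e : Fin n → F) (f : Fin n → F) (_ : Orthonormal ℂ e) (_ : Orthonormal ℂ f),
    ENNReal.ofReal (∑ j, ‖(inner ℂ (f j) (T (e j)) : ℂ)‖)

/-!
Since `⟪x, α x⟫` is real, `Re ⟪x, (t k + i(α − z)) x⟫ = t ⟪x, k x⟫ + Im z ‖x‖² ≥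
(Im z − |t| ‖k‖) ‖x‖² ≥ ‖x‖²`. An operator with `Re ⟪x, A x⟫ ≥ ‖x‖²` is bounded below and has
dense range, hence it is invertible with `‖A⁻¹‖ ≤ 1`. For a contraction `B`,
`|⟪f, c* B c e⟫| ≤ ‖c f‖ ‖c e‖ ≤ ½ (‖c f‖² + ‖c e‖²)`, and `∑ ‖c e_j‖²` over a finite orthonormal
family is at most the trace norm of `c c*`; this gives both bounds on `c* A⁻¹ c`.
-/

section Coercive

variable {𝕜 H : Type*} [RCLike 𝕜] [NormedAddCommGroup H] [InnerProductSpace 𝕜 H]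

lemma mul_norm_le_norm_apply_of_coercive (f : H →L[𝕜] H) {m : ℝ}
    (h : ∀ x, m * ‖x‖ ^ 2 ≤ RCLike.re (inner 𝕜 x (f x))) (x : H) : m * ‖x‖ ≤ ‖f x‖ := by
  rcases (norm_nonneg x).eq_or_lt with hx | hx
  · simp [← hx]
  · refine le_of_mul_le_mul_right ?_ hx
    calc m * ‖x‖ * ‖x‖ = m * ‖x‖ ^ 2 := by ring
      _ ≤ RCLike.re (inner 𝕜 x (f x)) := h x
      _ ≤ ‖x‖ * ‖f x‖ := re_inner_le_norm x (f x)
      _ = ‖f x‖ * ‖x‖ := mul_comm _ _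

lemma isUnit_and_norm_inverse_le_of_coercive [CompleteSpace H] (f : H →L[𝕜] H) {m : ℝ}
    (hm : 0 < m) (h : ∀ x, m * ‖x‖ ^ 2 ≤ RCLike.re (inner 𝕜 x (f x))) :
    IsUnit f ∧ ‖Ring.inverse f‖ ≤ m⁻¹ := by
  have hf : IsUnit f := by
    refine f.isUnit_of_forall_le_norm_inner_map (c := ⟨m, hm.le⟩) hm fun x => ?_
    calc ‖x‖ ^ 2 * m = m * ‖x‖ ^ 2 := mul_comm _ _
      _ ≤ RCLike.re (inner 𝕜 x (f x)) := h x
      _ ≤ ‖inner 𝕜 x (f x)‖ := RCLike.re_le_norm _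
      _ = ‖inner 𝕜 (f x) x‖ := norm_inner_symm _ _
  refine ⟨hf, ?_⟩
  obtain ⟨u, rfl⟩ := hf
  rw [Ring.inverse_unit]
  refine opNorm_le_bound _ (inv_nonneg.mpr hm.le) fun y => ?_
  have hy := mul_norm_le_norm_apply_of_coercive (u : H →L[𝕜] H) h ((↑u⁻¹ : H →L[𝕜] H) y)
  have hinv : (u : H →L[𝕜] H) ((↑u⁻¹ : H →L[𝕜] H) y) = y := congr($(u.mul_inv) y)
  rw [hinv] at hy
  rw [inv_mul_eq_div, le_div_iff₀' hm]
  exact hy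

end Coercive

lemma re_inner_I_smul_sub_smul_one {H : Type*} [NormedAddCommGroup H] [InnerProductSpace ℂ H]
    [CompleteSpace H] {α : H →L[ℂ] H} (hα : IsSelfAdjoint α) (z : ℂ) (x : H) :
    (inner ℂ x ((Complex.I • (α - z • 1)) x)).re = z.im * ‖x‖ ^ 2 := by
  have hαx : (inner ℂ x (α x)).im = 0 := hα.isSymmetric.im_inner_self_apply x
  simp [inner_self_eq_norm_sq_to_K, Complex.mul_re, Complex.mul_im, hαx, ← Complex.ofReal_pow]

lemma sub_abs_mul_norm_mul_sq_le_re_inner {H : Type*} [NormedAddCommGroup H]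
    [InnerProductSpace ℂ H] [CompleteSpace H] {α : H →L[ℂ] H} (hα : IsSelfAdjoint α)
    (K : H →L[ℂ] H) (t : ℝ) (z : ℂ) (x : H) :
    (z.im - |t| * ‖K‖) * ‖x‖ ^ 2 ≤ (inner ℂ x ((t • K + Complex.I • (α - z • 1)) x)).re := by
  have hK : -(|t| * ‖K‖ * ‖x‖ ^ 2) ≤ (inner ℂ x ((t • K) x)).re := by
    refine neg_le_of_abs_le ((Complex.abs_re_le_norm _).trans ?_)
    calc ‖inner ℂ x ((t • K) x)‖ ≤ ‖x‖ * ‖(t • K) x‖ := norm_inner_le_norm _ _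
      _ ≤ ‖x‖ * (‖t • K‖ * ‖x‖) := by gcongr; exact le_opNorm _ _
      _ = |t| * ‖K‖ * ‖x‖ ^ 2 := by rw [norm_smul, Real.norm_eq_abs]; ring
  rw [add_apply, inner_add_right, Complex.add_re, re_inner_I_smul_sub_smul_one hα]
  linarith

section TraceNorm

variable {E H : Type*} [NormedAddCommGroup E] [InnerProductSpace ℂ E]
  [NormedAddCommGroup H] [InnerProductSpace ℂ H]

lemma ofReal_sum_norm_inner_le_traceNorm (T : H →L[ℂ] H) {n : ℕ} {e f : Fin n → H}
    (he : Orthonormal ℂ e) (hf : Orthonormal ℂ f) :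
    ENNReal.ofReal (∑ j, ‖inner ℂ (f j) (T (e j))‖) ≤ traceNorm T :=
  le_iSup_of_le n <| le_iSup_of_le e <| le_iSup_of_le f <| le_iSup_of_le he <|
    le_iSup_of_le hf le_rfl

variable [CompleteSpace E] [CompleteSpace H]

/-- Expand each `c e_j` in an orthonormal basis `b` of the span of the `c e_j`, swap the sums and
apply Bessel's inequality to the family `e` and the vectors `c* b_i`. -/
lemma ofReal_sum_norm_sq_le_traceNorm_comp_adjoint (c : E →L[ℂ] H) {n : ℕ} {e : Fin n → E}
    (he : Orthonormal ℂ e) :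
    ENNReal.ofReal (∑ j, ‖c (e j)‖ ^ 2) ≤ traceNorm (c ∘L adjoint c) := by
  set V : Submodule ℂ H := Submodule.span ℂ (Set.range fun j => c (e j))
  have : FiniteDimensional ℂ V := FiniteDimensional.span_of_finite ℂ (Set.finite_range _)
  let b := stdOrthonormalBasis ℂ V
  have hb : Orthonormal ℂ fun i => (b i : H) := b.orthonormal.comp_linearIsometry V.subtypeₗᵢ
  refine le_trans (ENNReal.ofReal_le_ofReal ?_) (ofReal_sum_norm_inner_le_traceNorm _ hb hb)
  calc ∑ j, ‖c (e j)‖ ^ 2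
      = ∑ j, ∑ i, ‖inner ℂ (b i : H) (c (e j))‖ ^ 2 := by
        refine Finset.sum_congr rfl fun j _ => ?_
        have hj : c (e j) ∈ V := Submodule.subset_span ⟨j, rfl⟩
        simpa [Submodule.coe_inner] using (b.sum_sq_norm_inner_right ⟨c (e j), hj⟩).symm
    _ = ∑ i, ∑ j, ‖inner ℂ (e j) (adjoint c (b i))‖ ^ 2 := by
        rw [Finset.sum_comm]
        refine Finset.sum_congr rfl fun i _ => Finset.sum_congr rfl fun j _ => ?_
        rw [← adjoint_inner_left, norm_inner_symm]
    _ ≤ ∑ i, ‖adjoint c (b i)‖ ^ 2 :=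
        Finset.sum_le_sum fun i _ => he.sum_inner_products_le _
    _ = ∑ i, ‖inner ℂ (b i : H) ((c ∘L adjoint c) (b i))‖ := by
        refine Finset.sum_congr rfl fun i _ => ?_
        rw [comp_apply, ← adjoint_inner_left, inner_self_eq_norm_sq_to_K,
          norm_pow, RCLike.norm_ofReal, abs_norm]

lemma traceNorm_adjoint_comp_comp_le (c : E →L[ℂ] H) {B : H →L[ℂ] H} (hB : ‖B‖ ≤ 1) :
    traceNorm (adjoint c ∘L (B ∘L c)) ≤ traceNorm (c ∘L adjoint c) := by
  refine iSup_le fun n => iSup_le fun e => iSup_le fun f => iSup_le fun he => iSup_le fun hf => ?_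
  have hterm : ∀ j, ‖inner ℂ (f j) ((adjoint c ∘L (B ∘L c)) (e j))‖
      ≤ ‖c (f j)‖ ^ 2 / 2 + ‖c (e j)‖ ^ 2 / 2 := fun j => by
    rw [comp_apply, adjoint_inner_right]
    calc ‖inner ℂ (c (f j)) ((B ∘L c) (e j))‖ ≤ ‖c (f j)‖ * ‖B (c (e j))‖ :=
          norm_inner_le_norm _ _
      _ ≤ ‖c (f j)‖ * ‖c (e j)‖ := by gcongr; simpa using B.le_of_opNorm_le hB _
      _ ≤ ‖c (f j)‖ ^ 2 / 2 + ‖c (e j)‖ ^ 2 / 2 := by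
          linarith [two_mul_le_add_sq ‖c (f j)‖ ‖c (e j)‖]
  calc ENNReal.ofReal (∑ j, ‖inner ℂ (f j) ((adjoint c ∘L (B ∘L c)) (e j))‖)
      ≤ ENNReal.ofReal ((∑ j, ‖c (f j)‖ ^ 2) / 2 + (∑ j, ‖c (e j)‖ ^ 2) / 2) := by
        refine ENNReal.ofReal_le_ofReal ?_
        rw [Finset.sum_div, Finset.sum_div, ← Finset.sum_add_distrib]
        exact Finset.sum_le_sum fun j _ => hterm j
    _ = ENNReal.ofReal (∑ j, ‖c (f j)‖ ^ 2) / 2 + ENNReal.ofReal (∑ j, ‖c (e j)‖ ^ 2) / 2 := by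
        rw [ENNReal.ofReal_add (by positivity) (by positivity), ENNReal.ofReal_div_of_pos two_pos,
          ENNReal.ofReal_div_of_pos two_pos, ENNReal.ofReal_ofNat]
    _ ≤ traceNorm (c ∘L adjoint c) / 2 + traceNorm (c ∘L adjoint c) / 2 := by
        gcongr <;> exact ofReal_sum_norm_sq_le_traceNorm_comp_adjoint c ‹_›
    _ = traceNorm (c ∘L adjoint c) := ENNReal.add_halves _

lemma norm_adjoint_comp_comp_le (c : E →L[ℂ] H) {B : H →L[ℂ] H} (hB : ‖B‖ ≤ 1) :
    ‖adjoint c ∘L (B ∘L c)‖ ≤ ‖c ∘L adjoint c‖ := by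
  have hc : ‖c ∘L adjoint c‖ = ‖c‖ * ‖c‖ := by
    simpa only [adjoint_adjoint, LinearIsometryEquiv.norm_map] using
      norm_adjoint_comp_self (adjoint c)
  calc ‖adjoint c ∘L (B ∘L c)‖ ≤ ‖adjoint c‖ * (‖B‖ * ‖c‖) :=
        (opNorm_comp_le _ _).trans (by gcongr; exact opNorm_comp_le _ _)
    _ ≤ ‖c‖ * (1 * ‖c‖) := by rw [LinearIsometryEquiv.norm_map]; gcongr
    _ = ‖c ∘L adjoint c‖ := by rw [hc, one_mul]

end TraceNorm

theorem stmt_12_general {E H : Type*} [NormedAddCommGroup E] [InnerProductSpace ℂ E] [CompleteSpace E]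
    [NormedAddCommGroup H] [InnerProductSpace ℂ H] [CompleteSpace H]
    (α : H →L[ℂ] H) (hα : IsSelfAdjoint α)
    (c : E →L[ℂ] H)
    (μ₀ : ℝ) (z : ℂ)
    (hz : 1 + μ₀ * ‖c.comp (adjoint c)‖ / 2 ≤ z.im) :
    ∀ t : ℝ, |t| ≤ μ₀ / 2 →
      IsUnit (t • c.comp (adjoint c) + Complex.I • (α - z • 1)) ∧
      ‖Ring.inverse (t • c.comp (adjoint c) + Complex.I • (α - z • 1))‖ ≤ 1 ∧
      ‖(adjoint c).comp
          ((Ring.inverse (t • c.comp (adjoint c) + Complex.I • (α - z • 1))).comp c)‖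
        ≤ ‖c.comp (adjoint c)‖ ∧
      traceNorm ((adjoint c).comp
          ((Ring.inverse (t • c.comp (adjoint c) + Complex.I • (α - z • 1))).comp c))
        ≤ traceNorm (c.comp (adjoint c)) := by
  intro t ht
  have hcoercive : ∀ x : H, 1 * ‖x‖ ^ 2 ≤
      RCLike.re (inner ℂ x ((t • c.comp (adjoint c) + Complex.I • (α - z • 1)) x)) := fun x => by
    refine le_trans ?_ (sub_abs_mul_norm_mul_sq_le_re_inner hα _ t z x)
    have htk : |t| * ‖c.comp (adjoint c)‖ ≤ μ₀ / 2 * ‖c.comp (adjoint c)‖ := by gcongr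
    gcongr
    linarith
  obtain ⟨hunit, hinv⟩ := isUnit_and_norm_inverse_le_of_coercive _ one_pos hcoercive
  rw [inv_one] at hinv
  exact ⟨hunit, hinv, norm_adjoint_comp_comp_le c hinv, traceNorm_adjoint_comp_comp_le c hinv⟩

/-- For selfadjoint `α`, Hilbert–Schmidt `c` with `k = cc*`, `μ₀ > 0` and
`Im z ≥ 1 + ½μ₀‖k‖`: for all `|t| ≤ ½μ₀`, `t·k + i(α − z)` is invertible with inverse a
contraction, `‖c*(t·k + i(α − z))⁻¹c‖ ≤ ‖k‖` and
`‖c*(t·k + i(α − z))⁻¹c‖_{S₁} ≤ ‖k‖_{S₁}`. -/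
theorem stmt_12 {E H : Type*} [NormedAddCommGroup E] [InnerProductSpace ℂ E] [CompleteSpace E]
    [NormedAddCommGroup H] [InnerProductSpace ℂ H] [CompleteSpace H]
    (α : H →L[ℂ] H) (hα : IsSelfAdjoint α)
    (c : E →L[ℂ] H)
    (hHS : traceNorm (c.comp (adjoint c)) ≠ ⊤)
    (μ₀ : ℝ) (hμ₀ : 0 < μ₀) (z : ℂ)
    (hz : 1 + μ₀ * ‖c.comp (adjoint c)‖ / 2 ≤ z.im) :
    ∀ t : ℝ, |t| ≤ μ₀ / 2 →
      IsUnit (t • c.comp (adjoint c) + Complex.I • (α - z • 1)) ∧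
      ‖Ring.inverse (t • c.comp (adjoint c) + Complex.I • (α - z • 1))‖ ≤ 1 ∧
      ‖(adjoint c).comp
          ((Ring.inverse (t • c.comp (adjoint c) + Complex.I • (α - z • 1))).comp c)‖
        ≤ ‖c.comp (adjoint c)‖ ∧
      traceNorm ((adjoint c).comp
          ((Ring.inverse (t • c.comp (adjoint c) + Complex.I • (α - z • 1))).comp c))
        ≤ traceNorm (c.comp (adjoint c)) :=
  stmt_12_general α hα c μ₀ z hz
end

section
/- Let α be a selfadjoint operator on a Hilbert space H, c : E → H a bounded operator, μ_x > 0, and z ∈ ℂ₊. Then Re[I − (i/2) μ_x c*(α − zI)⁻¹ c] = I + (1/2)(Im z) μ_x c*(α − zI)⁻¹(α − zI)⁻ᵃ* c ≥ I; in particular I − (i/2) μ_x c*(α − zI)⁻¹ c is boundedly invertible with inverse of norm at most 1 and depends analytically on z ∈ ℂ₊. -/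
/-! For selfadjoint `α` and `z ∉ ℝ` the resolvent `R = (α - z)⁻¹` exists, and
`R - R* = R ((α - z̄) - (α - z)) R* = (z - z̄) R R*`. Hence for `T = I - (i/2) μ_x c* R c`
one gets `Re T = I + ½ (Im z) μ_x (R* c)* (R* c) ≥ I`, so `‖x‖² ≤ Re ⟪T x, x⟫ ≤ ‖T x‖ ‖x‖`.
Such a bound makes `T` bounded below with dense range, hence invertible with `‖T⁻¹‖ ≤ 1`.
Analyticity in `z` is that of inversion on the units of a Banach algebra. -/

open ContinuousLinearMap

section Resolvent

variable {A : Type*}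

lemma IsSelfAdjoint.isUnit_sub_smul_one [CStarAlgebra A] {a : A} (ha : IsSelfAdjoint a)
    {z : ℂ} (hz : z.im ≠ 0) : IsUnit (a - z • 1) := by
  have hz' : z ∉ spectrum ℂ a := fun h ↦ hz (ha.im_eq_zero_of_mem_spectrum h)
  rw [spectrum.notMem_iff, ← IsUnit.neg_iff, neg_sub, Algebra.algebraMap_eq_smul_one] at hz'
  exact hz'

lemma IsSelfAdjoint.inverse_sub_star_inverse [Ring A] [StarRing A] [Algebra ℂ A]
    [StarModule ℂ A] {a : A} (ha : IsSelfAdjoint a) {z : ℂ} (hz : IsUnit (a - z • 1)) :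
    Ring.inverse (a - z • 1) - star (Ring.inverse (a - z • 1)) =
      (z - star z) • (Ring.inverse (a - z • 1) * star (Ring.inverse (a - z • 1))) := by
  set R := Ring.inverse (a - z • 1)
  have hRA : R * (a - z • 1) = 1 := Ring.inverse_mul_cancel _ hz
  have hAR : star (a - z • 1) * star R = 1 := by rw [← star_mul, hRA, star_one]
  have hstar : star (a - z • 1) - (a - z • 1) = (z - star z) • (1 : A) := by
    rw [star_sub, ha.star_eq, star_smul, star_one, sub_smul]
    abel
  calc R - star R = R * (star (a - z • 1) * star R) - R * (a - z • 1) * star R := by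
        rw [hAR, hRA, mul_one, one_mul]
    _ = R * ((star (a - z • 1) - (a - z • 1)) * star R) := by noncomm_ring
    _ = (z - star z) • (R * star R) := by
        rw [hstar, smul_mul_assoc, one_mul, mul_smul_comm]

lemma analyticOnNhd_inverse_sub_smul_one [NormedRing A] [NormedAlgebra ℂ A] [CompleteSpace A]
    (a : A) : AnalyticOnNhd ℂ (fun w : ℂ ↦ Ring.inverse (a - w • 1)) {w | IsUnit (a - w • 1)} :=
  fun w hw ↦ (analyticOnNhd_inverse (𝕜 := ℂ) _ hw).comp (f := fun w : ℂ ↦ a - w • 1) (by fun_prop)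

end Resolvent

section Coercive

variable {𝕜 E : Type*} [RCLike 𝕜] [NormedAddCommGroup E] [InnerProductSpace 𝕜 E]

lemma norm_le_norm_apply_of_norm_sq_le_re_inner {T : E →L[𝕜] E}
    (hT : ∀ x, ‖x‖ ^ 2 ≤ RCLike.re (inner 𝕜 (T x) x)) (x : E) : ‖x‖ ≤ ‖T x‖ := by
  rcases eq_or_ne x 0 with rfl | hx
  · simp
  refine le_of_mul_le_mul_right ?_ (norm_pos_iff.mpr hx)
  calc ‖x‖ * ‖x‖ = ‖x‖ ^ 2 := (sq _).symm
    _ ≤ RCLike.re (inner 𝕜 (T x) x) := hT x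
    _ ≤ ‖inner 𝕜 (T x) x‖ := RCLike.re_le_norm _
    _ ≤ ‖T x‖ * ‖x‖ := norm_inner_le_norm _ _

lemma isUnit_and_norm_inverse_le_one_of_norm_sq_le_re_inner [CompleteSpace E] {T : E →L[𝕜] E}
    (hT : ∀ x, ‖x‖ ^ 2 ≤ RCLike.re (inner 𝕜 (T x) x)) :
    IsUnit T ∧ ‖Ring.inverse T‖ ≤ 1 := by
  have hunit : IsUnit T := isUnit_of_forall_le_norm_inner_map T one_pos fun x ↦ by
    simpa using (hT x).trans (RCLike.re_le_norm _)
  refine ⟨hunit, opNorm_le_bound _ zero_le_one fun y ↦ ?_⟩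
  calc ‖Ring.inverse T y‖ ≤ ‖T (Ring.inverse T y)‖ := norm_le_norm_apply_of_norm_sq_le_re_inner hT _
    _ = 1 * ‖y‖ := by
      rw [← ContinuousLinearMap.comp_apply, ← mul_def, Ring.mul_inverse_cancel _ hunit,
        one_apply_eq_self, one_mul]

end Coercive

section Operators

variable {E H : Type*} [NormedAddCommGroup E] [InnerProductSpace ℂ E] [CompleteSpace E]
  [NormedAddCommGroup H] [InnerProductSpace ℂ H] [CompleteSpace H]

lemma norm_sq_le_re_inner_of_isPositive_sub_one {T : E →L[ℂ] E}
    (hT : ((2 : ℝ)⁻¹ • (T + adjoint T) - 1).IsPositive) (x : E) :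
    ‖x‖ ^ 2 ≤ RCLike.re (inner ℂ (T x) x) := by
  have h := hT.re_inner_nonneg_left x
  have hadj : RCLike.re (inner ℂ (adjoint T x) x) = RCLike.re (inner ℂ (T x) x) := by
    rw [adjoint_inner_left, inner_re_symm]
  rw [sub_apply, smul_apply, add_apply, one_apply_eq_self, RCLike.real_smul_eq_coe_smul (K := ℂ),
    inner_sub_left, inner_smul_real_left, inner_add_left, map_sub, RCLike.smul_re, map_add, hadj,
    inner_self_eq_norm_sq] at h
  linarith

lemma adjoint_one_sub_smul_adjoint_conj (c : E →L[ℂ] H) (R : H →L[ℂ] H) (κ : ℂ) :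
    adjoint (1 - κ • (adjoint c).comp (R.comp c)) =
      1 - star κ • (adjoint c).comp ((adjoint R).comp c) := by
  rw [← star_eq_adjoint, star_sub, star_one, star_smul, star_eq_adjoint, adjoint_comp,
    adjoint_comp, adjoint_adjoint, comp_assoc]

lemma two_inv_smul_add_adjoint_one_sub_I_smul_adjoint_conj (c : E →L[ℂ] H) (R : H →L[ℂ] H)
    (s t : ℝ) (hR : R - adjoint R = (((2 * t : ℝ) : ℂ) * Complex.I) • R.comp (adjoint R)) :
    (2 : ℝ)⁻¹ • ((1 - ((s : ℂ) * Complex.I) • (adjoint c).comp (R.comp c)) +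
        adjoint (1 - ((s : ℂ) * Complex.I) • (adjoint c).comp (R.comp c))) =
      1 + (t * s) • (adjoint c).comp (R.comp ((adjoint R).comp c)) := by
  have hstar : star ((s : ℂ) * Complex.I) = -((s : ℂ) * Complex.I) := by
    simp [Complex.conj_ofReal]
  have hdiff : (adjoint c).comp (R.comp c) - (adjoint c).comp ((adjoint R).comp c) =
      (((2 * t : ℝ) : ℂ) * Complex.I) • (adjoint c).comp (R.comp ((adjoint R).comp c)) := by
    rw [← comp_sub, ← sub_comp, hR, smul_comp, comp_smul, comp_assoc]
  have hscalar :
      ((s : ℂ) * Complex.I) * (((2 * t : ℝ) : ℂ) * Complex.I) = ((-(2 * (t * s)) : ℝ) : ℂ) := by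
    push_cast
    ring_nf
    rw [Complex.I_sq]
    ring
  rw [adjoint_one_sub_smul_adjoint_conj, hstar]
  calc _ = (2 : ℝ)⁻¹ • ((2 : ℝ) • (1 : E →L[ℂ] E) - ((s : ℂ) * Complex.I) •
        ((adjoint c).comp (R.comp c) - (adjoint c).comp ((adjoint R).comp c))) := by
        congr 1; module
    _ = (2 : ℝ)⁻¹ • ((2 : ℝ) • (1 : E →L[ℂ] E) + (2 * (t * s) : ℝ) •
        (adjoint c).comp (R.comp ((adjoint R).comp c))) := by
        rw [hdiff, smul_smul, hscalar]; module
    _ = _ := by module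

lemma analyticOnNhd_one_sub_smul_adjoint_conj_inverse {α : H →L[ℂ] H} (hα : IsSelfAdjoint α)
    (c : E →L[ℂ] H) (κ : ℂ) :
    AnalyticOnNhd ℂ (fun w : ℂ ↦ 1 - κ • (adjoint c).comp ((Ring.inverse (α - w • 1)).comp c))
      {w : ℂ | 0 < w.im} := by
  intro w hw
  have hinv : AnalyticAt ℂ (fun w : ℂ ↦ Ring.inverse (α - w • 1)) w :=
    analyticOnNhd_inverse_sub_smul_one α w (hα.isUnit_sub_smul_one hw.ne')
  have hconj : AnalyticAt ℂ (fun w ↦ (adjoint c).comp ((Ring.inverse (α - w • 1)).comp c)) w :=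
    (((compL ℂ E H E (adjoint c)).comp ((compL ℂ E H H).flip c)).analyticAt _).comp hinv
  exact analyticAt_const.sub (hconj.const_smul (c := κ))

end Operators

/-- For selfadjoint `α`, bounded `c : E → H`, `μ_x > 0` and `z ∈ ℂ₊`, with
`R(z) = (α − z)⁻¹` and `T(z) = I − (i/2)μ_x c* R(z) c`, one has
`Re T(z) = I + ½ (Im z) μ_x c* R(z) R(z)* c ≥ I`; hence `T(z)` is invertible with
`‖T(z)⁻¹‖ ≤ 1`, and `T` is analytic on the upper half-plane. -/
theorem stmt_15 {E H : Type*} [NormedAddCommGroup E] [InnerProductSpace ℂ E] [CompleteSpace E]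
    [NormedAddCommGroup H] [InnerProductSpace ℂ H] [CompleteSpace H]
    (α : H →L[ℂ] H) (hα : IsSelfAdjoint α)
    (c : E →L[ℂ] H) (μx : ℝ) (hμx : 0 < μx) (z : ℂ) (hz : 0 < z.im) :
    ((2 : ℝ)⁻¹ •
        (((1 : E →L[ℂ] E) - (((μx / 2 : ℝ) : ℂ) * Complex.I) •
            ((adjoint c).comp ((Ring.inverse (α - z • 1)).comp c))) +
          adjoint ((1 : E →L[ℂ] E) - (((μx / 2 : ℝ) : ℂ) * Complex.I) •
            ((adjoint c).comp ((Ring.inverse (α - z • 1)).comp c)))) =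
      1 + (z.im * μx / 2 : ℝ) •
        ((adjoint c).comp ((Ring.inverse (α - z • 1)).comp
          ((adjoint (Ring.inverse (α - z • 1))).comp c)))) ∧
    ((2 : ℝ)⁻¹ •
        (((1 : E →L[ℂ] E) - (((μx / 2 : ℝ) : ℂ) * Complex.I) •
            ((adjoint c).comp ((Ring.inverse (α - z • 1)).comp c))) +
          adjoint ((1 : E →L[ℂ] E) - (((μx / 2 : ℝ) : ℂ) * Complex.I) •
            ((adjoint c).comp ((Ring.inverse (α - z • 1)).comp c)))) -
      1).IsPositive ∧
    IsUnit ((1 : E →L[ℂ] E) - (((μx / 2 : ℝ) : ℂ) * Complex.I) •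
        ((adjoint c).comp ((Ring.inverse (α - z • 1)).comp c))) ∧
    ‖Ring.inverse ((1 : E →L[ℂ] E) - (((μx / 2 : ℝ) : ℂ) * Complex.I) •
        ((adjoint c).comp ((Ring.inverse (α - z • 1)).comp c)))‖ ≤ 1 ∧
    AnalyticOnNhd ℂ
      (fun w : ℂ => (1 : E →L[ℂ] E) - (((μx / 2 : ℝ) : ℂ) * Complex.I) •
        ((adjoint c).comp ((Ring.inverse (α - w • 1)).comp c)))
      {w : ℂ | 0 < w.im} := by
  have hu : IsUnit (α - z • 1) := hα.isUnit_sub_smul_one hz.ne'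
  set R := Ring.inverse (α - z • (1 : H →L[ℂ] H))
  have hR : R - adjoint R = (((2 * z.im : ℝ) : ℂ) * Complex.I) • R.comp (adjoint R) := by
    have h := hα.inverse_sub_star_inverse hu
    rwa [star_eq_adjoint, Complex.star_def, Complex.sub_conj, mul_def] at h
  have hre := two_inv_smul_add_adjoint_one_sub_I_smul_adjoint_conj c R (μx / 2) z.im hR
  rw [← mul_div_assoc] at hre
  have hX : ((adjoint c).comp (R.comp ((adjoint R).comp c))).IsPositive := by
    simpa only [adjoint_comp, adjoint_adjoint, comp_assoc] using
      isPositive_adjoint_comp_self ((adjoint R).comp c)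
  have hpos : ((1 : E →L[ℂ] E) + (z.im * μx / 2 : ℝ) •
      (adjoint c).comp (R.comp ((adjoint R).comp c)) - 1).IsPositive := by
    rw [add_sub_cancel_left, ← Complex.coe_smul]
    exact hX.smul_of_nonneg (Complex.zero_le_real.mpr (by positivity))
  rw [← hre] at hpos
  obtain ⟨hunit, hnorm⟩ := isUnit_and_norm_inverse_le_one_of_norm_sq_le_re_inner
    (norm_sq_le_re_inner_of_isPositive_sub_one hpos)
  exact ⟨hre, hpos, hunit, hnorm, analyticOnNhd_one_sub_smul_adjoint_conj_inverse hα c _⟩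
end
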